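/- arXiv:math/0504400 — 7 statements merged into one kernel-verified Lean document; each statement's English description precedes it below -/
import Mathlib

section
/- Let D_n be defined by D_0 = "1", D_{n+1} = "0" ++ D_n ++ D_n, and let E_n be defined by E_0 = "1", E_{n+1} = E_n ++ E_n ++ "0". Then for all n ≥ 0, D_0 ++ D_0 ++ D_1 ++ ⋯ ++ D_n = E_n ++ E_{n-1} ++ ⋯ ++ E_1 ++ E_0 ++ E_0. -/
/-- D_0 = "1", D_{n+1} = "0" ++ D_n ++ D_n. -/
def Dword : ℕ → List ℕ
  | 0 => [1]
  | n + 1 => 0 :: (Dword n ++ Dword n)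

/-- E_0 = "1", E_{n+1} = E_n ++ E_n ++ "0". -/
def Eword : ℕ → List ℕ
  | 0 => [1]
  | n + 1 => Eword n ++ Eword n ++ [0]

/-- E_n ++ E_{n-1} ++ ⋯ ++ E_0 -/
def Ecat (n : ℕ) : List ℕ := (((List.range (n+1)).reverse.map Eword)).flatten

lemma Ecat_zero : Ecat 0 = [1] := by simp [Ecat, Eword, List.range_succ]

lemma Ecat_succ (n : ℕ) : Ecat (n+1) = Eword (n+1) ++ Ecat n := by
  simp [Ecat, List.range_succ]

lemma Eword_eq (n : ℕ) :
    Eword (n+1) = Ecat n ++ [1] ++ List.replicate (n+1) 0 := by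
  induction n with
  | zero => simp [Eword, Ecat_zero]
  | succ n ih =>
    rw [show Eword (n+2) = Eword (n+1) ++ Eword (n+1) ++ [0] from rfl,
      Ecat_succ]
    rw [ih]
    simp [List.replicate_succ' (n := n+1), List.append_assoc]

lemma Dword_eq (n : ℕ) :
    Dword (n+1) = List.replicate (n+1) 0 ++ Ecat n ++ [1] := by
  induction n with
  | zero => simp [Dword, Ecat_zero]
  | succ n ih =>
    rw [show Dword (n+2) = 0 :: (Dword (n+1) ++ Dword (n+1)) from rfl, ih,
      Ecat_succ, Eword_eq, List.replicate_succ (a := (0:ℕ)) (n := n+1)]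
    simp [List.append_assoc]

/-- D_0 ++ D_0 ++ D_1 ++ ⋯ ++ D_n = E_n ++ E_{n-1} ++ ⋯ ++ E_1 ++ E_0 ++ E_0. -/
theorem Dconcat_eq_Econcat (n : ℕ) :
    Dword 0 ++ ((List.range (n + 1)).map Dword).flatten
      = ((List.range (n + 1)).reverse.map Eword).flatten ++ Eword 0 := by
  have key : ∀ m, Dword 0 ++ ((List.range (m + 1)).map Dword).flatten
      = Ecat m ++ [1] := by
    intro m
    induction m with
    | zero => simp [Dword, Ecat_zero, List.range_succ]
    | succ m ih =>
      rw [List.range_succ, Ecat_succ, Eword_eq]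
      simp only [List.map_append, List.flatten_append, ← List.append_assoc, ih,
        Dword_eq]
      simp [Dword_eq, List.append_assoc]
  rw [show ((List.range (n + 1)).reverse.map Eword).flatten = Ecat n from rfl,
    key, show Eword 0 = [1] from rfl]
end

section
/- Let a_0 be the Conolly sequence (a_0(0)=a_0(1)=1, a_0(2)=2, a_0(n)=a_0(n-a_0(n-1))+a_0(n-1-a_0(n-2)) for n>2) and let a_1 be the Tanny-type sequence defined by a_1(n)=1 for 0 ≤ n ≤ 2, a_1(3)=2, and a_1(n) = a_1(n-1-a_1(n-1)) + a_1(n-2-a_1(n-2)) for n > 3. Then for all n ≥ 1, a_1(n) = a_0(n - ⌊log₂ n⌋). -/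
/-
Let `f` be the nondecreasing sequence taking each value `m ≥ 1` exactly `1 + ν₂ m` times; the last
index of the value `m` is `S m = m + S ⌊m/2⌋`. Reading positions off this identity gives
`f (x + 1 - f x) = ⌈f (x + 1) / 2⌉`, and since only even values repeat,
`⌈f (x + 1) / 2⌉ + ⌈f x / 2⌉ = f (x + 1)`: together these are the Conolly recurrence, so `a₀ = f`.
For `h n = f (n - ⌊log₂ n⌋)`, monotonicity of `x - f x` and the values of `f` at the ends of dyadic
blocks show `⌊log₂ (n - h n)⌋ = ⌊log₂ n⌋ - 1`, whence `h (n - h n) = ⌈f (n - ⌊log₂ n⌋ + 1) / 2⌉`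
and the `s = 1` recurrence for `h` reduces to the identity above; so `a₁ = h`.
-/

/-- `conollyLast m = ∑_{i ≤ m} (1 + ν₂ i) = 2m - s₂(m)`: the Conolly sequence takes the value `m`
exactly `1 + ν₂ m` times, and `conollyLast m` is the last index where it equals `m`. -/
def conollyLast : ℕ → ℕ
  | 0 => 0
  | m + 1 => conollyLast ((m + 1) / 2) + (m + 1)

@[simp] theorem conollyLast_zero : conollyLast 0 = 0 := by simp [conollyLast]

theorem conollyLast_eq_half_add (m : ℕ) : conollyLast m = conollyLast (m / 2) + m := by
  cases m <;> simp [conollyLast]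

theorem conollyLast_two_mul_add_one (j : ℕ) :
    conollyLast (2 * j + 1) = conollyLast (2 * j) + 1 := by
  rw [conollyLast_eq_half_add, conollyLast_eq_half_add (2 * j),
    show (2 * j + 1) / 2 = j by omega, show 2 * j / 2 = j by omega]
  omega

theorem conollyLast_strictMono : StrictMono conollyLast := by
  refine strictMono_nat_of_lt_succ fun m => ?_
  induction m using Nat.strong_induction_on with
  | _ m ih =>
    have half_le : conollyLast (m / 2) ≤ conollyLast ((m + 1) / 2) := by
      rcases (by omega : (m + 1) / 2 = m / 2 ∨ (m + 1) / 2 = m / 2 + 1) with h | h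
      · rw [h]
      · rcases Nat.eq_zero_or_pos m with rfl | hm
        · simp
        · rw [h]; exact (ih (m / 2) (by omega)).le
    rw [conollyLast_eq_half_add m, conollyLast_eq_half_add (m + 1)]
    omega

theorem conollyLast_two_pow (k : ℕ) : conollyLast (2 ^ k) + 1 = 2 ^ (k + 1) := by
  induction k with
  | zero => rw [pow_zero, conollyLast_eq_half_add]; simp
  | succ k ih =>
    rw [conollyLast_eq_half_add, pow_succ, Nat.mul_div_cancel _ two_pos, pow_succ _ (k + 1)]
    omega

theorem conollyLast_two_pow_sub_one (k : ℕ) : conollyLast (2 ^ k - 1) + k + 2 = 2 ^ (k + 1) := by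
  induction k with
  | zero => simp
  | succ k ih =>
    have hk : 1 ≤ 2 ^ k := Nat.one_le_two_pow
    rw [conollyLast_eq_half_add, show (2 ^ (k + 1) - 1) / 2 = 2 ^ k - 1 by rw [pow_succ]; omega,
      pow_succ _ (k + 1), pow_succ]
    rw [pow_succ] at ih
    omega

noncomputable def conolly (x : ℕ) : ℕ :=
  Nat.find (⟨x, conollyLast_strictMono.id_le x⟩ : ∃ m, x ≤ conollyLast m)

theorem conolly_le_iff {x m : ℕ} : conolly x ≤ m ↔ x ≤ conollyLast m := by
  rw [conolly, Nat.find_le_iff]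
  exact ⟨fun ⟨k, hk, hx⟩ => hx.trans (conollyLast_strictMono.monotone hk), fun h => ⟨m, le_rfl, h⟩⟩

theorem lt_conolly_iff {x m : ℕ} : m < conolly x ↔ conollyLast m < x := by
  simpa only [not_le] using conolly_le_iff.not

theorem le_conollyLast_conolly (x : ℕ) : x ≤ conollyLast (conolly x) :=
  conolly_le_iff.1 le_rfl

theorem conolly_eq_succ {x m : ℕ} (h₁ : conollyLast m < x) (h₂ : x ≤ conollyLast (m + 1)) :
    conolly x = m + 1 :=
  le_antisymm (conolly_le_iff.2 h₂) (lt_conolly_iff.2 h₁)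

theorem conolly_conollyLast_add_one (m : ℕ) : conolly (conollyLast m + 1) = m + 1 :=
  conolly_eq_succ (lt_add_one _) (conollyLast_strictMono (lt_add_one m))

theorem conolly_le_self (x : ℕ) : conolly x ≤ x :=
  conolly_le_iff.2 (conollyLast_strictMono.id_le x)

theorem conolly_pos {x : ℕ} (hx : 0 < x) : 0 < conolly x :=
  lt_conolly_iff.2 (by rwa [conollyLast_zero])

theorem conolly_mono : Monotone conolly := fun _ _ hxy =>
  conolly_le_iff.2 (hxy.trans (le_conollyLast_conolly _))

theorem conolly_succ_le (x : ℕ) : conolly (x + 1) ≤ conolly x + 1 :=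
  conolly_le_iff.2 ((le_conollyLast_conolly x).trans_lt (conollyLast_strictMono (lt_add_one _)))

theorem even_conolly_of_conolly_succ_eq {x : ℕ} (h : conolly (x + 1) = conolly x) :
    Even (conolly x) := by
  by_contra hodd
  obtain ⟨j, hj⟩ := Nat.not_even_iff_odd.1 hodd
  have h_last := le_conollyLast_conolly (x + 1)
  have h_prev : conollyLast (2 * j) < x := lt_conolly_iff.1 (by omega)
  rw [h, hj, conollyLast_two_mul_add_one] at h_last
  omega

theorem conolly_succ_eq_half_add_half (x : ℕ) :
    conolly (x + 1) = (conolly (x + 1) + 1) / 2 + (conolly x + 1) / 2 := by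
  have hmono := conolly_mono (Nat.le_add_right x 1)
  have hstep := conolly_succ_le x
  rcases (by omega : conolly (x + 1) = conolly x ∨ conolly (x + 1) = conolly x + 1) with h | h
  · obtain ⟨j, hj⟩ := even_conolly_of_conolly_succ_eq h
    omega
  · omega

theorem conolly_add_one_sub_conolly (x : ℕ) :
    conolly (x + 1 - conolly x) = (conolly (x + 1) + 1) / 2 := by
  obtain ⟨m, hm⟩ := Nat.exists_eq_add_one.2 (conolly_pos (x := x + 1) (by omega))
  have hmono := conolly_mono (Nat.le_add_right x 1)
  have hstep := conolly_succ_le x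
  have hL := conollyLast_eq_half_add m
  rw [hm]
  rcases (by omega : conolly x = m ∨ conolly x = m + 1) with h | h
  · have hx : x = conollyLast m :=
      le_antisymm (conolly_le_iff.1 h.le)
        (Nat.le_of_lt_succ (lt_conolly_iff.1 (show m < conolly (x + 1) by omega)))
    rw [h, show x + 1 - m = conollyLast (m / 2) + 1 by omega, conolly_conollyLast_add_one]
    omega
  · obtain ⟨i, rfl⟩ : ∃ i, m = 2 * i + 1 := by
      obtain ⟨j, hj⟩ := even_conolly_of_conolly_succ_eq (hm.trans h.symm)
      exact ⟨j - 1, by omega⟩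
    have h_prev : conollyLast (2 * i + 1) < x := lt_conolly_iff.1 (by omega)
    have h_last := le_conollyLast_conolly (x + 1)
    have hL' := conollyLast_eq_half_add (2 * i + 1 + 1)
    rw [show (2 * i + 1) / 2 = i by omega] at hL
    rw [show (2 * i + 1 + 1) / 2 = i + 1 by omega] at hL'
    rw [hm] at h_last
    rw [h, show (2 * i + 1 + 1 + 1) / 2 = i + 1 by omega]
    exact conolly_eq_succ (by omega) (by omega)

theorem conolly_rec (x : ℕ) :
    conolly (x + 2) = conolly (x + 2 - conolly (x + 1)) + conolly (x + 1 - conolly x) := by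
  rw [conolly_add_one_sub_conolly (x + 1), conolly_add_one_sub_conolly x]
  exact conolly_succ_eq_half_add_half (x + 1)

theorem monotone_sub_conolly : Monotone fun x => x - conolly x :=
  monotone_nat_of_le_succ fun x => by have := conolly_succ_le x; omega

theorem conolly_eq_two_pow {k x : ℕ} (h₁ : 2 ^ (k + 1) ≤ x + (k + 1)) (h₂ : x < 2 ^ (k + 1)) :
    conolly x = 2 ^ k := by
  have hk : 1 ≤ 2 ^ k := Nat.one_le_two_pow
  have := conollyLast_two_pow k
  have := conollyLast_two_pow_sub_one k
  rw [← Nat.sub_add_cancel hk]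
  exact conolly_eq_succ (by omega) (by rw [Nat.sub_add_cancel hk]; omega)

theorem conolly_one : conolly 1 = 1 := conolly_eq_two_pow (k := 0) (by simp) (by simp)

theorem conolly_two : conolly 2 = 2 := conolly_eq_two_pow (k := 1) (by simp) (by simp)

theorem eq_conolly_of_rec (a : ℕ → ℕ) (h₁ : a 1 = 1) (h₂ : a 2 = 2)
    (hrec : ∀ n, 2 < n → a n = a (n - a (n - 1)) + a (n - 1 - a (n - 2))) :
    ∀ n, 1 ≤ n → a n = conolly n := by
  intro n
  induction n using Nat.strong_induction_on with
  | _ n ih =>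
    intro hn
    rcases Nat.lt_or_ge n 3 with hn3 | hn3
    · interval_cases n
      · rw [h₁, conolly_one]
      · rw [h₂, conolly_two]
    · obtain ⟨x, rfl⟩ : ∃ x, n = x + 3 := ⟨n - 3, by omega⟩
      have hpos := conolly_pos (show 0 < x + 2 by omega)
      have hle₂ := conolly_le_self (x + 2)
      have hle₁ := conolly_le_self (x + 1)
      rw [hrec _ (by omega), show x + 3 - 1 = x + 2 from rfl, show x + 3 - 2 = x + 1 from rfl,
        ih (x + 2) (by omega) (by omega), ih (x + 1) (by omega) (by omega),
        ih _ (by omega) (by omega), ih _ (by omega) (by omega)]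
      exact (conolly_rec (x + 1)).symm

noncomputable def tanny (n : ℕ) : ℕ := conolly (n - Nat.log 2 n)

theorem log_sub_tanny {n : ℕ} (hn : 2 ≤ n) : Nat.log 2 (n - tanny n) = Nat.log 2 n - 1 := by
  unfold tanny
  set L := Nat.log 2 n
  have hL : 1 ≤ L := Nat.log_pos one_lt_two hn
  have h_low : 2 ^ L ≤ n := Nat.pow_log_le_self 2 (by omega)
  have h_high : n < 2 ^ (L + 1) := Nat.lt_pow_succ_log_self one_lt_two n
  have hpow : 2 ^ L = 2 * 2 ^ (L - 1) := (mul_pow_sub_one (by omega) 2).symm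
  have hL_lt : L < 2 ^ L := Nat.lt_two_pow_self
  have h_first : conolly (2 ^ L - L) = 2 ^ (L - 1) :=
    conolly_eq_two_pow (by rw [Nat.sub_add_cancel hL]; omega) (by rw [Nat.sub_add_cancel hL]; omega)
  have h_last : conolly (2 ^ (L + 1) - (L + 1)) = 2 ^ L := conolly_eq_two_pow (by omega) (by omega)
  have h_ge := monotone_sub_conolly (show 2 ^ L - L ≤ n - L by omega)
  have h_le := monotone_sub_conolly (show n - L ≤ 2 ^ (L + 1) - (L + 1) by omega)
  have h_tanny := conolly_le_self (n - L)
  dsimp only at h_ge h_le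
  rw [h_first] at h_ge
  rw [h_last] at h_le
  apply Nat.log_eq_of_pow_le_of_lt_pow
  · omega
  · rw [Nat.sub_add_cancel hL]; omega

theorem tanny_sub_tanny {n : ℕ} (hn : 2 ≤ n) :
    tanny (n - tanny n) = (conolly (n - Nat.log 2 n + 1) + 1) / 2 := by
  have hlog := log_sub_tanny hn
  have hL : 1 ≤ Nat.log 2 n := Nat.log_pos one_lt_two hn
  have hLn : Nat.log 2 n < n := Nat.log_lt_self 2 (by omega)
  have h_tanny := conolly_le_self (n - Nat.log 2 n)
  rw [tanny, hlog, ← conolly_add_one_sub_conolly]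
  unfold tanny
  congr 1
  omega

theorem tanny_rec {n : ℕ} (hn : 4 ≤ n) :
    tanny n = tanny (n - 1 - tanny (n - 1)) + tanny (n - 2 - tanny (n - 2)) := by
  rw [tanny_sub_tanny (by omega), tanny_sub_tanny (by omega), tanny]
  set L := Nat.log 2 n
  have hL : 2 ≤ L := (Nat.le_log_iff_pow_le one_lt_two (by omega)).2 (by omega)
  have h_low : 2 ^ L ≤ n := Nat.pow_log_le_self 2 (by omega)
  have h_high : n < 2 ^ (L + 1) := Nat.lt_pow_succ_log_self one_lt_two n
  have hpow : 2 ^ L = 2 * 2 ^ (L - 1) := (mul_pow_sub_one (by omega) 2).symm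
  have hpow' : 2 ^ (L - 1) = 2 * 2 ^ (L - 2) := by
    rw [← mul_pow_sub_one (show L - 1 ≠ 0 by omega), Nat.sub_sub]
  have hL_lt : L < 2 ^ L := Nat.lt_two_pow_self
  have h_block : ∀ x, 2 ^ L ≤ x + L → x ≤ 2 ^ L - L + 1 → conolly x = 2 ^ (L - 1) := fun x h₁ h₂ =>
    conolly_eq_two_pow (by rw [Nat.sub_add_cancel (by omega : 1 ≤ L)]; omega)
      (by rw [Nat.sub_add_cancel (by omega : 1 ≤ L)]; omega)
  have h_log_prev : ∀ m, 2 ^ (L - 1) ≤ m → m < 2 ^ L → Nat.log 2 m = L - 1 := fun m h₁ h₂ =>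
    Nat.log_eq_of_pow_le_of_lt_pow h₁ (by rwa [Nat.sub_add_cancel (by omega : 1 ≤ L)])
  have h_log : ∀ m, 2 ^ L ≤ m → m ≤ n → Nat.log 2 m = L := fun m h₁ h₂ =>
    Nat.log_eq_of_pow_le_of_lt_pow h₁ (by omega)
  -- At `n = 2 ^ L` and `n = 2 ^ L + 1` the logarithm drops along the way, but all three arguments
  -- of `conolly` then lie in the block of the value `2 ^ (L - 1)`.
  rcases (by omega : n = 2 ^ L ∨ n = 2 ^ L + 1 ∨ 2 ^ L + 2 ≤ n) with h | h | h
  · rw [h_log_prev (n - 1) (by omega) (by omega), h_log_prev (n - 2) (by omega) (by omega),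
      h_block _ (by omega) (by omega), h_block _ (by omega) (by omega),
      h_block _ (by omega) (by omega)]
    omega
  · rw [h_log (n - 1) (by omega) (by omega), h_log_prev (n - 2) (by omega) (by omega),
      h_block _ (by omega) (by omega), h_block _ (by omega) (by omega),
      h_block _ (by omega) (by omega)]
    omega
  · rw [h_log (n - 1) (by omega) (by omega), h_log (n - 2) (by omega) (by omega),
      show n - 1 - L + 1 = n - L - 1 + 1 by omega, show n - 2 - L + 1 = n - L - 1 by omega,
      show n - L = n - L - 1 + 1 by omega]
    exact conolly_succ_eq_half_add_half _

theorem eq_tanny_of_rec (a : ℕ → ℕ) (hinit : ∀ n ≤ 2, a n = 1) (h₃ : a 3 = 2)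
    (hrec : ∀ n, 3 < n → a n = a (n - 1 - a (n - 1)) + a (n - 2 - a (n - 2))) :
    ∀ n, 1 ≤ n → a n = tanny n := by
  intro n
  induction n using Nat.strong_induction_on with
  | _ n ih =>
    intro hn
    rcases Nat.lt_or_ge n 4 with hn4 | hn4
    · have log_eq_one : ∀ m, 2 ≤ m → m < 4 → Nat.log 2 m = 1 := fun m h₁ h₂ =>
        Nat.log_eq_of_pow_le_of_lt_pow h₁ h₂
      interval_cases n
      · rw [hinit 1 (by omega), tanny, Nat.log_one_right, conolly_one]
      · rw [hinit 2 le_rfl, tanny, log_eq_one 2 (by omega) (by omega), conolly_one]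
      · rw [h₃, tanny, log_eq_one 3 (by omega) (by omega), conolly_two]
    · have tanny_lt : ∀ m, 2 ≤ m → tanny m < m := fun m hm =>
        (conolly_le_self _).trans_lt (Nat.sub_lt (by omega) (Nat.log_pos one_lt_two hm))
      have h₁ := tanny_lt (n - 1) (by omega)
      have h₂ := tanny_lt (n - 2) (by omega)
      rw [hrec n (by omega), ih (n - 1) (by omega) (by omega), ih (n - 2) (by omega) (by omega),
        ih _ (by omega) (by omega), ih _ (by omega) (by omega)]
      exact (tanny_rec hn4).symm

theorem tanny_eq_conolly_shift_general (a0 a1 : ℕ → ℕ)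
    (h01 : a0 1 = 1) (h02 : a0 2 = 2)
    (h0rec : ∀ n, 2 < n → a0 n = a0 (n - a0 (n - 1)) + a0 (n - 1 - a0 (n - 2)))
    (h1init : ∀ n ≤ 2, a1 n = 1) (h13 : a1 3 = 2)
    (h1rec : ∀ n, 3 < n →
      a1 n = a1 (n - 1 - a1 (n - 1)) + a1 (n - 2 - a1 (n - 2))) :
    ∀ n, 1 ≤ n → a1 n = a0 (n - Nat.log 2 n) := by
  intro n hn
  rw [eq_tanny_of_rec a1 h1init h13 h1rec n hn, tanny,
    eq_conolly_of_rec a0 h01 h02 h0rec _ (by have := Nat.log_lt_self 2 (by omega : n ≠ 0); omega)]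

/-- If a₀ is the Conolly (s = 0) meta-Fibonacci sequence and a₁ is the Tanny-type
    (s = 1) sequence, then a₁(n) = a₀(n - ⌊log₂ n⌋) for all n ≥ 1. -/
theorem tanny_eq_conolly_shift (a0 a1 : ℕ → ℕ)
    (h00 : a0 0 = 1) (h01 : a0 1 = 1) (h02 : a0 2 = 2)
    (h0rec : ∀ n, 2 < n → a0 n = a0 (n - a0 (n - 1)) + a0 (n - 1 - a0 (n - 2)))
    (h1init : ∀ n ≤ 2, a1 n = 1) (h13 : a1 3 = 2)
    (h1rec : ∀ n, 3 < n →
      a1 n = a1 (n - 1 - a1 (n - 1)) + a1 (n - 2 - a1 (n - 2))) :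
    ∀ n, 1 ≤ n → a1 n = a0 (n - Nat.log 2 n) :=
  tanny_eq_conolly_shift_general a0 a1 h01 h02 h0rec h1init h13 h1rec
end

section
/- Fix s ≥ 1. Define a_s by: a_s(n)=1 for 0 ≤ n ≤ s+1, a_s(s+2)=2, and a_s(n) = a_s(n-s-a_s(n-1)) + a_s(n-s-1-a_s(n-2)) for n > s+2. Then for all h ≥ 2: (i) if 1 ≤ k ≤ 2^(h-1) - 1 then a_s(2^h + (s-1)h + k + 1) = 2^(h-2) + a_s(2^(h-1) + (s-1)h - s + k + 1); (ii) if 1 ≤ k ≤ 2^(h-1) - 1 then a_s(2^h + 2^(h-1) + (s-1)h + k) = 2^(h-1) + a_s(2^(h-1) + (s-1)h - s + k + 1); (iii) if 2^h + (s-1)h - s + 1 ≤ n ≤ 2^h + (s-1)h + 1 then a_s(n) = 2^(h-1). -/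
/-- Invariant describing generation `h = log₂(4p)` of the meta-Fibonacci sequence,
with `p = 2^(h-1)/2`, `d = (s-1)*(h-1)` where `s = t+1`. -/
def MFGood (a : ℕ → ℕ) (t p d : ℕ) : Prop :=
  (∀ n, 4*p + d ≤ n + 1 → n ≤ 4*p + d + t + 1 → a n = 2*p) ∧
  (∀ j, j ≤ 2*p → a (4*p + d + t + 1 + j) = p + a (2*p + d + j)) ∧
  (∀ j, j ≤ 2*p → a (6*p + d + t + j) = 2*p + a (2*p + d + j)) ∧
  (∀ n, n + 2 = 4*p + d → a n + 1 = 2*p) ∧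
  (∀ j, j + 2 ≤ 4*p →
    j + 1 ≤ a (4*p + d + t + 1 + j) ∧ 2*p ≤ a (4*p + d + t + 1 + j) ∧
      a (4*p + d + t + 1 + j) ≤ 2*p + j)

lemma mf_A2 (t : ℕ) (a : ℕ → ℕ)
    (h1 : ∀ n, n ≤ t + 2 → a n = 1) (h2 : a (t + 3) = 2)
    (hrec : ∀ n, t + 3 < n →
      a n = a (n - (t + 1) - a (n - 1)) + a (n - (t + 1) - 1 - a (n - 2))) :
    ∀ n, t + 3 ≤ n → n ≤ 2*t + 5 → a n = 2 := by
  intro n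
  induction n using Nat.strong_induction_on with
  | _ n ih =>
    intro hn1 hn2
    rcases eq_or_lt_of_le hn1 with he | hlt
    · rw [← he]; exact h2
    · rw [hrec n (by omega)]
      have ha1 : a (n - 1) = 2 := ih (n-1) (by omega) (by omega) (by omega)
      rcases em (n = t + 4) with rfl | hne
      · have ha2 : a (t + 4 - 2) = 1 := h1 _ (by omega)
        rw [ha1, ha2, show t + 4 - (t+1) - 2 = 1 from by omega,
            show t + 4 - (t+1) - 1 - 1 = 1 from by omega, h1 1 (by omega)]
      · have ha2 : a (n - 2) = 2 := ih (n-2) (by omega) (by omega) (by omega)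
        rw [ha1, ha2, h1 (n - (t+1) - 2) (by omega), h1 (n - (t+1) - 1 - 2) (by omega)]

lemma mf_val6 (t : ℕ) (a : ℕ → ℕ)
    (h1 : ∀ n, n ≤ t + 2 → a n = 1) (h2 : a (t + 3) = 2)
    (hrec : ∀ n, t + 3 < n →
      a n = a (n - (t + 1) - a (n - 1)) + a (n - (t + 1) - 1 - a (n - 2))) :
    a (2*t + 6) = 3 := by
  have hA2 := mf_A2 t a h1 h2 hrec
  rw [hrec (2*t+6) (by omega), show 2*t+6-1 = 2*t+5 from by omega,
      show 2*t+6-2 = 2*t+4 from by omega,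
      hA2 (2*t+5) (by omega) (by omega), hA2 (2*t+4) (by omega) (by omega),
      show 2*t+6-(t+1)-2 = t+3 from by omega, show 2*t+6-(t+1)-1-2 = t+2 from by omega,
      h2, h1 (t+2) (by omega)]

lemma mf_val7 (t : ℕ) (a : ℕ → ℕ)
    (h1 : ∀ n, n ≤ t + 2 → a n = 1) (h2 : a (t + 3) = 2)
    (hrec : ∀ n, t + 3 < n →
      a n = a (n - (t + 1) - a (n - 1)) + a (n - (t + 1) - 1 - a (n - 2))) :
    a (2*t + 7) = 4 := by
  have hA2 := mf_A2 t a h1 h2 hrec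
  have v3 := mf_val6 t a h1 h2 hrec
  rw [hrec (2*t+7) (by omega), show 2*t+7-1 = 2*t+6 from by omega,
      show 2*t+7-2 = 2*t+5 from by omega, v3, hA2 (2*t+5) (by omega) (by omega),
      show 2*t+7-(t+1)-3 = t+3 from by omega, show 2*t+7-(t+1)-1-2 = t+3 from by omega, h2]

lemma mf_baseGood (t : ℕ) (a : ℕ → ℕ)
    (h1 : ∀ n, n ≤ t + 2 → a n = 1) (h2 : a (t + 3) = 2)
    (hrec : ∀ n, t + 3 < n →
      a n = a (n - (t + 1) - a (n - 1)) + a (n - (t + 1) - 1 - a (n - 2))) :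
    MFGood a t 2 (2 * t) := by
  have hA2 := mf_A2 t a h1 h2 hrec
  have v3 := mf_val6 t a h1 h2 hrec
  have v4 := mf_val7 t a h1 h2 hrec
  have v5 : ∀ n, 2*t + 7 ≤ n → n ≤ 3*t + 9 → a n = 4 := by
    intro n
    induction n using Nat.strong_induction_on with
    | _ n ih =>
      intro hn1 hn2
      rcases em (n = 2*t + 7) with rfl | hne1
      · exact v4
      rcases em (n = 2*t + 8) with rfl | hne2
      · rw [hrec (2*t+8) (by omega), show 2*t+8-1 = 2*t+7 from by omega,
            show 2*t+8-2 = 2*t+6 from by omega, v4, v3,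
            show 2*t+8-(t+1)-4 = t+3 from by omega,
            show 2*t+8-(t+1)-1-3 = t+3 from by omega, h2]
      · rw [hrec n (by omega)]
        have e1 : a (n-1) = 4 := ih (n-1) (by omega) (by omega) (by omega)
        have e2 : a (n-2) = 4 := ih (n-2) (by omega) (by omega) (by omega)
        rw [e1, e2, hA2 (n - (t+1) - 4) (by omega) (by omega),
            hA2 (n - (t+1) - 1 - 4) (by omega) (by omega)]
  have v6 : a (3*t + 10) = 4 := by
    rw [hrec (3*t+10) (by omega), show 3*t+10-1 = 3*t+9 from by omega,
        show 3*t+10-2 = 3*t+8 from by omega,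
        v5 (3*t+9) (by omega) (by omega), v5 (3*t+8) (by omega) (by omega),
        show 3*t+10-(t+1)-4 = 2*t+5 from by omega,
        show 3*t+10-(t+1)-1-4 = 2*t+4 from by omega,
        hA2 (2*t+5) (by omega) (by omega), hA2 (2*t+4) (by omega) (by omega)]
  have v7 : a (3*t + 11) = 5 := by
    rw [hrec (3*t+11) (by omega), show 3*t+11-1 = 3*t+10 from by omega,
        show 3*t+11-2 = 3*t+9 from by omega, v6, v5 (3*t+9) (by omega) (by omega),
        show 3*t+11-(t+1)-4 = 2*t+6 from by omega,
        show 3*t+11-(t+1)-1-4 = 2*t+5 from by omega,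
        v3, hA2 (2*t+5) (by omega) (by omega)]
  have v8 : a (3*t + 12) = 6 := by
    rw [hrec (3*t+12) (by omega), show 3*t+12-1 = 3*t+11 from by omega,
        show 3*t+12-2 = 3*t+10 from by omega, v7, v6,
        show 3*t+12-(t+1)-5 = 2*t+6 from by omega,
        show 3*t+12-(t+1)-1-4 = 2*t+6 from by omega, v3]
  have v9 : a (3*t + 13) = 6 := by
    rw [hrec (3*t+13) (by omega), show 3*t+13-1 = 3*t+12 from by omega,
        show 3*t+13-2 = 3*t+11 from by omega, v8, v7,
        show 3*t+13-(t+1)-6 = 2*t+6 from by omega,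
        show 3*t+13-(t+1)-1-5 = 2*t+6 from by omega, v3]
  have v10 : a (3*t + 14) = 7 := by
    rw [hrec (3*t+14) (by omega), show 3*t+14-1 = 3*t+13 from by omega,
        show 3*t+14-2 = 3*t+12 from by omega, v9, v8,
        show 3*t+14-(t+1)-6 = 2*t+7 from by omega,
        show 3*t+14-(t+1)-1-6 = 2*t+6 from by omega, v4, v3]
  have v11 : a (3*t + 15) = 8 := by
    rw [hrec (3*t+15) (by omega), show 3*t+15-1 = 3*t+14 from by omega,
        show 3*t+15-2 = 3*t+13 from by omega, v10, v9,
        show 3*t+15-(t+1)-7 = 2*t+7 from by omega,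
        show 3*t+15-(t+1)-1-6 = 2*t+7 from by omega, v4]
  have v12 : a (3*t + 16) = 8 := by
    rw [hrec (3*t+16) (by omega), show 3*t+16-1 = 3*t+15 from by omega,
        show 3*t+16-2 = 3*t+14 from by omega, v11, v10,
        show 3*t+16-(t+1)-8 = 2*t+7 from by omega,
        show 3*t+16-(t+1)-1-7 = 2*t+7 from by omega, v4]
  have w4 : a (2*t+4) = 2 := hA2 _ (by omega) (by omega)
  have w5 : a (2*t+5) = 2 := hA2 _ (by omega) (by omega)
  have w8 : a (2*t+8) = 4 := v5 _ (by omega) (by omega)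
  have b9 : a (3*t+9) = 4 := v5 _ (by omega) (by omega)
  refine ⟨?_, ?_, ?_, ?_, ?_⟩
  · intro n ha hb
    have := v5 n (by omega) (by omega)
    omega
  · intro j hj
    interval_cases j
    · rw [show 4*2 + 2*t + t + 1 + 0 = 3*t+9 from by omega,
          show 2*2 + 2*t + 0 = 2*t+4 from by omega]; omega
    · rw [show 4*2 + 2*t + t + 1 + 1 = 3*t+10 from by omega,
          show 2*2 + 2*t + 1 = 2*t+5 from by omega]; omega
    · rw [show 4*2 + 2*t + t + 1 + 2 = 3*t+11 from by omega,
          show 2*2 + 2*t + 2 = 2*t+6 from by omega]; omega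
    · rw [show 4*2 + 2*t + t + 1 + 3 = 3*t+12 from by omega,
          show 2*2 + 2*t + 3 = 2*t+7 from by omega]; omega
    · rw [show 4*2 + 2*t + t + 1 + 4 = 3*t+13 from by omega,
          show 2*2 + 2*t + 4 = 2*t+8 from by omega]; omega
  · intro j hj
    interval_cases j
    · rw [show 6*2 + 2*t + t + 0 = 3*t+12 from by omega,
          show 2*2 + 2*t + 0 = 2*t+4 from by omega]; omega
    · rw [show 6*2 + 2*t + t + 1 = 3*t+13 from by omega,
          show 2*2 + 2*t + 1 = 2*t+5 from by omega]; omega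
    · rw [show 6*2 + 2*t + t + 2 = 3*t+14 from by omega,
          show 2*2 + 2*t + 2 = 2*t+6 from by omega]; omega
    · rw [show 6*2 + 2*t + t + 3 = 3*t+15 from by omega,
          show 2*2 + 2*t + 3 = 2*t+7 from by omega]; omega
    · rw [show 6*2 + 2*t + t + 4 = 3*t+16 from by omega,
          show 2*2 + 2*t + 4 = 2*t+8 from by omega]; omega
  · intro n hn
    rw [show n = 2*t+6 from by omega]; omega
  · intro j hj
    have hj' : j ≤ 6 := by omega
    interval_cases j
    · rw [show 4*2 + 2*t + t + 1 + 0 = 3*t+9 from by omega]; omega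
    · rw [show 4*2 + 2*t + t + 1 + 1 = 3*t+10 from by omega]; omega
    · rw [show 4*2 + 2*t + t + 1 + 2 = 3*t+11 from by omega]; omega
    · rw [show 4*2 + 2*t + t + 1 + 3 = 3*t+12 from by omega]; omega
    · rw [show 4*2 + 2*t + t + 1 + 4 = 3*t+13 from by omega]; omega
    · rw [show 4*2 + 2*t + t + 1 + 5 = 3*t+14 from by omega]; omega
    · rw [show 4*2 + 2*t + t + 1 + 6 = 3*t+15 from by omega]; omega

lemma mf_stepGood (t p d : ℕ) (a : ℕ → ℕ) (hp : 2 ≤ p) (hd : 2 * t ≤ d)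
    (hrec : ∀ n, t + 3 < n →
      a n = a (n - (t + 1) - a (n - 1)) + a (n - (t + 1) - 1 - a (n - 2)))
    (hG : MFGood a t p d) : MFGood a t (2 * p) (d + t) := by
  obtain ⟨hA, hB, hC, hE, hL⟩ := hG
  -- value just before the new plateau
  have y0 : ∀ n, n + 2 = 8 * p + d + t → a n + 1 = 4 * p := by
    intro n hn
    obtain ⟨j, hj⟩ : ∃ j, j + 2 = 2 * p := ⟨2*p - 2, by omega⟩
    have hc := hC j (by omega)
    have he := hE (2 * p + d + j) (by omega)
    rw [show n = 6 * p + d + t + j from by omega, hc]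
    omega
  -- first point of the new plateau
  have y1 : ∀ n, n + 1 = 8 * p + d + t → a n = 4 * p := by
    intro n hn
    obtain ⟨j, hj⟩ : ∃ j, j + 1 = 2 * p := ⟨2*p - 1, by omega⟩
    have hc := hC j (by omega)
    have ha := hA (2 * p + d + j) (by omega) (by omega)
    rw [show n = 6 * p + d + t + j from by omega, hc, ha]
    omega
  -- the new plateau
  have hA' : ∀ n, 8 * p + d + t ≤ n + 1 → n ≤ 8 * p + d + 2 * t + 1 → a n = 4 * p := by
    intro n
    induction n using Nat.strong_induction_on with
    | _ n ih =>
      intro hn1 hn2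
      rcases em (n + 1 = 8*p + d + t) with he | hne
      · exact y1 n he
      rw [hrec n (by omega)]
      have ha1 : a (n - 1) = 4 * p := by
        rcases em (n = 8*p + d + t) with he1 | hne1
        · exact y1 (n-1) (by omega)
        · exact ih (n-1) (by omega) (by omega) (by omega)
      rcases em (n = 8*p + d + t) with he1 | hne1
      · have ha2 := y0 (n - 2) (by omega)
        rw [ha1, show n - (t+1) - (4*p) = 4*p + d - 1 from by omega,
            show n - (t+1) - 1 - a (n - 2) = 4*p + d - 1 from by omega,
            hA (4*p + d - 1) (by omega) (by omega)]
        omega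
      · have ha2 : a (n - 2) = 4 * p := by
          rcases em (n = 8*p + d + t + 1) with he2 | hne2
          · exact y1 (n-2) (by omega)
          · exact ih (n-2) (by omega) (by omega) (by omega)
        rw [ha1, ha2, hA (n - (t+1) - (4*p)) (by omega) (by omega),
            hA (n - (t+1) - 1 - (4*p)) (by omega) (by omega)]
        omega
  -- helper value
  have hb0 : a (4*p + d + t + 1) = p + a (2*p + d) := by
    have := hB 0 (by omega)
    rw [show 4*p + d + t + 1 + 0 = 4*p + d + t + 1 from by omega,
        show 2*p + d + 0 = 2*p + d from by omega] at this
    exact this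
  -- new B part
  have hB' : ∀ j, j ≤ 4 * p → a (8*p + d + 2*t + 1 + j) = 2*p + a (4*p + d + t + j) := by
    intro j
    induction j using Nat.strong_induction_on with
    | _ j ih =>
      intro hj
      rcases em (j = 0) with rfl | hj0
      · rw [hA' (8*p + d + 2*t + 1 + 0) (by omega) (by omega),
            show 4*p + d + t + 0 = 4*p + d + t from by omega,
            hA (4*p + d + t) (by omega) (by omega)]
        omega
      rcases em (j = 1) with rfl | hj1
      · rw [hrec (8*p + d + 2*t + 1 + 1) (by omega),
            show 8*p + d + 2*t + 1 + 1 - 1 = 8*p + d + 2*t + 1 from by omega,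
            show 8*p + d + 2*t + 1 + 1 - 2 = 8*p + d + 2*t from by omega,
            hA' (8*p + d + 2*t + 1) (by omega) (by omega),
            hA' (8*p + d + 2*t) (by omega) (by omega),
            show 8*p + d + 2*t + 1 + 1 - (t+1) - 4*p = 4*p + d + t + 1 from by omega,
            show 8*p + d + 2*t + 1 + 1 - (t+1) - 1 - (4*p) = 4*p + d + t from by omega,
            hb0, hA (4*p + d + t) (by omega) (by omega)]
        omega
      obtain ⟨i, rfl⟩ : ∃ i, j = i + 2 := ⟨j - 2, by omega⟩
      have hu := ih (i+1) (by omega) (by omega)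
      have hv := ih i (by omega) (by omega)
      rw [show 8*p + d + 2*t + 1 + (i+1) = 8*p + d + 2*t + 2 + i from by omega,
          show 4*p + d + t + (i+1) = 4*p + d + t + 1 + i from by omega] at hu
      have hLu := hL i (by omega)
      have hvb : i ≤ a (4*p + d + t + i) ∧ 2*p ≤ a (4*p + d + t + i) ∧
          a (4*p + d + t + i) ≤ 2*p + i := by
        rcases em (i = 0) with rfl | hi0
        · rw [show 4*p + d + t + 0 = 4*p + d + t from by omega,
              hA (4*p + d + t) (by omega) (by omega)]
          omega
        · obtain ⟨i', rfl⟩ : ∃ i', i = i' + 1 := ⟨i - 1, by omega⟩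
          have := hL i' (by omega)
          rw [show 4*p + d + t + (i'+1) = 4*p + d + t + 1 + i' from by omega]
          exact ⟨by omega, by omega, by omega⟩
      obtain ⟨j1, hj1a, hj1b⟩ : ∃ j1, a (4*p + d + t + 1 + i) + j1 = 2*p + 1 + i ∧ j1 ≤ 2*p :=
        ⟨2*p + 1 + i - a (4*p + d + t + 1 + i), by omega, by omega⟩
      obtain ⟨j2, hj2a, hj2b⟩ : ∃ j2, a (4*p + d + t + i) + j2 = 2*p + i ∧ j2 ≤ 2*p :=
        ⟨2*p + i - a (4*p + d + t + i), by omega, by omega⟩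
      rw [show 8*p + d + 2*t + 1 + (i+2) = 8*p + d + 2*t + 3 + i from by omega,
          show 4*p + d + t + (i+2) = 4*p + d + t + 2 + i from by omega,
          hrec (8*p + d + 2*t + 3 + i) (by omega),
          show 8*p + d + 2*t + 3 + i - 1 = 8*p + d + 2*t + 2 + i from by omega,
          show 8*p + d + 2*t + 3 + i - 2 = 8*p + d + 2*t + 1 + i from by omega,
          hu, hv,
          show 8*p + d + 2*t + 3 + i - (t+1) - (2*p + a (4*p + d + t + 1 + i))
              = 4*p + d + t + 1 + j1 from by omega,
          show 8*p + d + 2*t + 3 + i - (t+1) - 1 - (2*p + a (4*p + d + t + i))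
              = 4*p + d + t + 1 + j2 from by omega,
          hB j1 hj1b, hB j2 hj2b,
          hrec (4*p + d + t + 2 + i) (by omega),
          show 4*p + d + t + 2 + i - 1 = 4*p + d + t + 1 + i from by omega,
          show 4*p + d + t + 2 + i - 2 = 4*p + d + t + i from by omega,
          show 4*p + d + t + 2 + i - (t+1) - a (4*p + d + t + 1 + i) = 2*p + d + j1
            from by omega,
          show 4*p + d + t + 2 + i - (t+1) - 1 - a (4*p + d + t + i) = 2*p + d + j2
            from by omega]
      omega
  -- new C part
  have hC' : ∀ j, j ≤ 4 * p → a (12*p + d + 2*t + j) = 4*p + a (4*p + d + t + j) := by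
    intro j
    induction j using Nat.strong_induction_on with
    | _ j ih =>
      intro hj
      rcases em (j = 0) with rfl | hj0
      · obtain ⟨i0, hi0⟩ : ∃ i0, i0 + 1 = 4*p := ⟨4*p - 1, by omega⟩
        rw [show 12*p + d + 2*t + 0 = 8*p + d + 2*t + 1 + i0 from by omega,
            hB' i0 (by omega), y1 (4*p + d + t + i0) (by omega),
            show 4*p + d + t + 0 = 4*p + d + t from by omega,
            hA (4*p + d + t) (by omega) (by omega)]
        omega
      rcases em (j = 1) with rfl | hj1
      · have hx : a (4*p + d + t + 1) = 2*p := by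
          have := hL 0 (by omega)
          rw [show 4*p + d + t + 1 + 0 = 4*p + d + t + 1 from by omega] at this
          omega
        rw [show 12*p + d + 2*t + 1 = 8*p + d + 2*t + 1 + 4*p from by omega,
            hB' (4*p) (le_refl _), hA' (4*p + d + t + 4*p) (by omega) (by omega), hx]
        omega
      obtain ⟨i, rfl⟩ : ∃ i, j = i + 2 := ⟨j - 2, by omega⟩
      have hu := ih (i+1) (by omega) (by omega)
      have hv := ih i (by omega) (by omega)
      rw [show 12*p + d + 2*t + (i+1) = 12*p + d + 2*t + 1 + i from by omega,
          show 4*p + d + t + (i+1) = 4*p + d + t + 1 + i from by omega] at hu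
      have hLu := hL i (by omega)
      have hvb : i ≤ a (4*p + d + t + i) ∧ 2*p ≤ a (4*p + d + t + i) ∧
          a (4*p + d + t + i) ≤ 2*p + i := by
        rcases em (i = 0) with rfl | hi0
        · rw [show 4*p + d + t + 0 = 4*p + d + t from by omega,
              hA (4*p + d + t) (by omega) (by omega)]
          omega
        · obtain ⟨i', rfl⟩ : ∃ i', i = i' + 1 := ⟨i - 1, by omega⟩
          have := hL i' (by omega)
          rw [show 4*p + d + t + (i'+1) = 4*p + d + t + 1 + i' from by omega]
          exact ⟨by omega, by omega, by omega⟩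
      obtain ⟨j1, hj1a, hj1b⟩ : ∃ j1, a (4*p + d + t + 1 + i) + j1 = 2*p + 1 + i ∧ j1 ≤ 2*p :=
        ⟨2*p + 1 + i - a (4*p + d + t + 1 + i), by omega, by omega⟩
      obtain ⟨j2, hj2a, hj2b⟩ : ∃ j2, a (4*p + d + t + i) + j2 = 2*p + i ∧ j2 ≤ 2*p :=
        ⟨2*p + i - a (4*p + d + t + i), by omega, by omega⟩
      rw [show 12*p + d + 2*t + (i+2) = 12*p + d + 2*t + 2 + i from by omega,
          show 4*p + d + t + (i+2) = 4*p + d + t + 2 + i from by omega,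
          hrec (12*p + d + 2*t + 2 + i) (by omega),
          show 12*p + d + 2*t + 2 + i - 1 = 12*p + d + 2*t + 1 + i from by omega,
          show 12*p + d + 2*t + 2 + i - 2 = 12*p + d + 2*t + i from by omega,
          hu, hv,
          show 12*p + d + 2*t + 2 + i - (t+1) - (4*p + a (4*p + d + t + 1 + i))
              = 6*p + d + t + j1 from by omega,
          show 12*p + d + 2*t + 2 + i - (t+1) - 1 - (4*p + a (4*p + d + t + i))
              = 6*p + d + t + j2 from by omega,
          hC j1 hj1b, hC j2 hj2b,
          hrec (4*p + d + t + 2 + i) (by omega),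
          show 4*p + d + t + 2 + i - 1 = 4*p + d + t + 1 + i from by omega,
          show 4*p + d + t + 2 + i - 2 = 4*p + d + t + i from by omega,
          show 4*p + d + t + 2 + i - (t+1) - a (4*p + d + t + 1 + i) = 2*p + d + j1
            from by omega,
          show 4*p + d + t + 2 + i - (t+1) - 1 - a (4*p + d + t + i) = 2*p + d + j2
            from by omega]
      omega
  -- new bounds part
  have hL' : ∀ j, j + 2 ≤ 8*p →
      j + 1 ≤ a (8*p + d + 2*t + 1 + j) ∧ 4*p ≤ a (8*p + d + 2*t + 1 + j) ∧
        a (8*p + d + 2*t + 1 + j) ≤ 4*p + j := by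
    intro j hj
    rcases le_or_gt j (4*p) with hle | hgt
    · rw [hB' j hle]
      have hw : j ≤ a (4*p + d + t + j) ∧ 2*p ≤ a (4*p + d + t + j) ∧
          a (4*p + d + t + j) ≤ 2*p + j := by
        rcases em (j = 0) with rfl | hj0
        · rw [show 4*p + d + t + 0 = 4*p + d + t from by omega,
              hA (4*p + d + t) (by omega) (by omega)]
          omega
        rcases em (j = 4*p) with rfl | hj4
        · rw [hA' (4*p + d + t + 4*p) (by omega) (by omega)]
          omega
        · obtain ⟨i, rfl⟩ : ∃ i, j = i + 1 := ⟨j - 1, by omega⟩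
          have := hL i (by omega)
          rw [show 4*p + d + t + (i+1) = 4*p + d + t + 1 + i from by omega]
          exact ⟨by omega, by omega, by omega⟩
      exact ⟨by omega, by omega, by omega⟩
    · obtain ⟨κ, hκ⟩ : ∃ κ, j + 1 = 4*p + κ := ⟨j + 1 - 4*p, by omega⟩
      rw [show 8*p + d + 2*t + 1 + j = 12*p + d + 2*t + κ from by omega,
          hC' κ (by omega)]
      obtain ⟨i', hi'⟩ : ∃ i', κ = i' + 1 := ⟨κ - 1, by omega⟩
      have := hL i' (by omega)
      rw [show 4*p + d + t + κ = 4*p + d + t + 1 + i' from by omega]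
      exact ⟨by omega, by omega, by omega⟩
  -- assemble
  refine ⟨?_, ?_, ?_, ?_, ?_⟩
  · intro n h1 h2
    rw [show 2*(2*p) = 4*p from by ring]
    exact hA' n (by omega) (by omega)
  · intro j hj
    rw [show 4*(2*p) + (d + t) + t + 1 + j = 8*p + d + 2*t + 1 + j from by ring,
        show 2*(2*p) + (d + t) + j = 4*p + d + t + j from by ring]
    exact hB' j (by omega)
  · intro j hj
    rw [show 6*(2*p) + (d + t) + t + j = 12*p + d + 2*t + j from by ring,
        show 2*(2*p) + (d + t) + j = 4*p + d + t + j from by ring,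
        show 2*(2*p) = 4*p from by ring]
    exact hC' j (by omega)
  · intro n hn
    have := y0 n (by omega)
    omega
  · intro j hj
    rw [show 4*(2*p) + (d + t) + t + 1 + j = 8*p + d + 2*t + 1 + j from by ring,
        show 2*(2*p) = 4*p from by ring]
    exact hL' j (by omega)

/-- Theorem 2 of Jackson–Ruskey for the meta-Fibonacci sequence a_s, s ≥ 1:
    (i) for 1 ≤ k ≤ 2^(h-1) - 1,
        a_s(2^h + (s-1)h + k + 1) = 2^(h-2) + a_s(2^(h-1) + (s-1)h - s + k + 1);
    (ii) for 1 ≤ k ≤ 2^(h-1) - 1,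
        a_s(2^h + 2^(h-1) + (s-1)h + k) = 2^(h-1) + a_s(2^(h-1) + (s-1)h - s + k + 1);
    (iii) for 2^h + (s-1)h - s + 1 ≤ n ≤ 2^h + (s-1)h + 1, a_s(n) = 2^(h-1). -/
theorem meta_fibonacci_self_similar (s : ℕ) (hs : 1 ≤ s) (a : ℕ → ℕ)
    (hinit : ∀ n ≤ s + 1, a n = 1) (htwo : a (s + 2) = 2)
    (hrec : ∀ n, s + 2 < n →
      a n = a (n - s - a (n - 1)) + a (n - s - 1 - a (n - 2))) :
    ∀ h, 2 ≤ h →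
      (∀ k, 1 ≤ k → k ≤ 2 ^ (h - 1) - 1 →
        a (2 ^ h + (s - 1) * h + k + 1)
          = 2 ^ (h - 2) + a (2 ^ (h - 1) + (s - 1) * h + k + 1 - s)) ∧
      (∀ k, 1 ≤ k → k ≤ 2 ^ (h - 1) - 1 →
        a (2 ^ h + 2 ^ (h - 1) + (s - 1) * h + k)
          = 2 ^ (h - 1) + a (2 ^ (h - 1) + (s - 1) * h + k + 1 - s)) ∧
      (∀ n, 2 ^ h + (s - 1) * h + 1 ≤ n + s → n ≤ 2 ^ h + (s - 1) * h + 1 →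
        a n = 2 ^ (h - 1)) := by
  obtain ⟨t, rfl⟩ : ∃ t, s = t + 1 := ⟨s - 1, by omega⟩
  have h1 : ∀ n, n ≤ t + 2 → a n = 1 := fun n hn => hinit n (by omega)
  have h2 : a (t + 3) = 2 := by
    have := htwo; rw [show t + 1 + 2 = t + 3 from by omega] at this; exact this
  have hrec' : ∀ n, t + 3 < n →
      a n = a (n - (t + 1) - a (n - 1)) + a (n - (t + 1) - 1 - a (n - 2)) := by
    intro n hn
    have := hrec n (by omega)
    exact this
  have hA2 := mf_A2 t a h1 h2 hrec'
  have v3 := mf_val6 t a h1 h2 hrec'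
  have v4 := mf_val7 t a h1 h2 hrec'
  have hGood : ∀ g : ℕ, MFGood a t (2^(g+1)) (t*(g+2)) := by
    intro g
    induction g with
    | zero =>
      have hb := mf_baseGood t a h1 h2 hrec'
      rw [show t*(0+2) = 2*t from by ring, show (2:ℕ)^(0+1) = 2 from by norm_num]
      exact hb
    | succ g ihg =>
      have hstep := mf_stepGood t (2^(g+1)) (t*(g+2)) a
        (by have : (2:ℕ)^1 ≤ 2^(g+1) := Nat.pow_le_pow_right (by norm_num) (by omega)
            simpa using this)
        (by have : t * 2 ≤ t * (g+2) := Nat.mul_le_mul_left t (by omega)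
            omega)
        hrec' ihg
      rw [show (2:ℕ)^(g+1+1) = 2*2^(g+1) from by ring,
          show t*(g+1+2) = t*(g+2) + t from by ring]
      exact hstep
  intro h hh
  rcases em (h = 2) with rfl | hne
  · refine ⟨?_, ?_, ?_⟩
    · intro k hk1 hk2
      have hk : k = 1 := by norm_num at hk2; omega
      subst hk
      rw [show 2^2 + (t+1-1)*2 + 1 + 1 = 2*t + 6 from by
            simp only [show (2:ℕ)^2 = 4 from by norm_num]; omega,
          show 2^(2-1) + (t+1-1)*2 + 1 + 1 - (t+1) = t + 3 from by
            simp only [show (2:ℕ)^(2-1) = 2 from by norm_num]; omega,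
          v3, h2]
      norm_num
    · intro k hk1 hk2
      have hk : k = 1 := by norm_num at hk2; omega
      subst hk
      rw [show 2^2 + 2^(2-1) + (t+1-1)*2 + 1 = 2*t + 7 from by
            simp only [show (2:ℕ)^2 = 4 from by norm_num,
              show (2:ℕ)^(2-1) = 2 from by norm_num]; omega,
          show 2^(2-1) + (t+1-1)*2 + 1 + 1 - (t+1) = t + 3 from by
            simp only [show (2:ℕ)^(2-1) = 2 from by norm_num]; omega,
          v4, h2]
      norm_num
    · intro n hn1 hn2
      rw [show (2:ℕ)^2 = 4 from by norm_num] at hn1 hn2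
      have := hA2 n (by omega) (by omega)
      rw [this]
      norm_num
  · obtain ⟨g, rfl⟩ : ∃ g, h = g + 3 := ⟨h - 3, by omega⟩
    obtain ⟨HA, HB, HC, HE, HL⟩ := hGood g
    have e1 : (2:ℕ)^(g+2) = 2*2^(g+1) := by ring
    have e2 : (2:ℕ)^(g+3) = 4*2^(g+1) := by ring
    have eh1 : g + 3 - 1 = g + 2 := by omega
    have eh2 : g + 3 - 2 = g + 1 := by omega
    refine ⟨?_, ?_, ?_⟩
    · intro k hk1 hk2
      rw [eh1, e1] at hk2
      rw [eh1, eh2, Nat.add_sub_cancel,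
          show (2:ℕ)^(g+3) + t*(g+3) + k + 1 = 4*2^(g+1) + t*(g+2) + t + 1 + k from by ring,
          show (2:ℕ)^(g+2) + t*(g+3) + k + 1 - (t+1) = 2*2^(g+1) + t*(g+2) + k from by
            rw [e1, show t*(g+3) = t*(g+2) + t from by ring]; omega]
      exact HB k (by omega)
    · intro k hk1 hk2
      rw [eh1, e1] at hk2
      rw [eh1, Nat.add_sub_cancel,
          show (2:ℕ)^(g+3) + 2^(g+2) + t*(g+3) + k = 6*2^(g+1) + t*(g+2) + t + k from by ring,
          show (2:ℕ)^(g+2) + t*(g+3) + k + 1 - (t+1) = 2*2^(g+1) + t*(g+2) + k from by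
            rw [e1, show t*(g+3) = t*(g+2) + t from by ring]; omega,
          e1]
      exact HC k (by omega)
    · intro n hn1 hn2
      rw [Nat.add_sub_cancel, e2, show t*(g+3) = t*(g+2) + t from by ring] at hn1 hn2
      rw [eh1, e1]
      exact HA n (by omega) (by omega)
end

section
/- Fix s ≥ 0. Define a_0 and a_s as the meta-Fibonacci sequences with a_t(n)=1 for 0 ≤ n ≤ t+1, a_t(t+2)=2, and a_t(n) = a_t(n-t-a_t(n-1)) + a_t(n-t-1-a_t(n-2)) for n > t+2 (for t ∈ {0, s}). Then for all h ≥ 1: a_s(n) = a_0(n - s·h) whenever 2^h + (s-1)h + 1 ≤ n ≤ 2^(h+1) + (s-1)h - 1, and a_s(n) = 2^(h-1) whenever 2^h + (s-1)h - s + 1 ≤ n ≤ 2^h + (s-1)h. -/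
/-!
`a_s(n) = 1 + c(n - 1)`, where `c(x) = count s x` counts the `m ≥ 1` with `F(m) ≤ x` for the
strictly increasing `F = jump s`: `F(0) = 0`, `F(m) = F(⌊m/2⌋) + m + s`. The recursion of `F` gives
`c(y - s - c(y)) = ⌊c(y + 1) / 2⌋`, and since `F(m + 1) = F(m) + 1` for even `m ≥ 2`, `c` can
only stall at odd values; together these turn the recursion of `a_s` into an arithmetic identity,
so `a_s` is this closed form by uniqueness.

Unfolding `F` gives `F_s(m) = F_0(m) + s · size m`, with `size` the bit length. For
`2^(h-1) ≤ m < 2^h` the shift is exactly `s·h`, which matches `c_s(x + s·h)` with `c_0(x)`; at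
`m = 2^(h-1)` the shift grows from `s·(h-1)` to `s·h`, which holds `c_s` at `2^(h-1) - 1` for `s`
extra steps.
-/

theorem Nat.size_eq_size_div_two_add_one {m : ℕ} (hm : 0 < m) : m.size = (m / 2).size + 1 := by
  conv_lhs => rw [← Nat.bit_bodd_div2 m]
  rw [Nat.size_bit (by rw [Nat.bit_bodd_div2]; omega), Nat.div2_val]

theorem Nat.size_two_pow_sub_one (k : ℕ) : (2 ^ k - 1).size = k := by
  have := Nat.one_le_two_pow (n := k)
  refine le_antisymm (Nat.size_le.2 (by omega)) ?_
  cases k with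
  | zero => exact Nat.zero_le _
  | succ k => exact Nat.lt_size.2 (by rw [pow_succ]; omega)

namespace MetaFib

def jump (s : ℕ) : ℕ → ℕ
  | 0 => 0
  | m + 1 => jump s ((m + 1) / 2) + (m + 1) + s

/-- As `jump s` is strictly increasing, this is the number of `m ≥ 1` with `jump s m ≤ x`. -/
def count (s x : ℕ) : ℕ :=
  Nat.findGreatest (fun m => jump s m ≤ x) x

structure IsMetaFib (s : ℕ) (a : ℕ → ℕ) : Prop where
  init : ∀ n ≤ s + 1, a n = 1
  two : a (s + 2) = 2
  recurrence : ∀ n, s + 2 < n → a n = a (n - s - a (n - 1)) + a (n - s - 1 - a (n - 2))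

variable {s : ℕ}

theorem jump_zero : jump s 0 = 0 := by
  rw [jump]

theorem jump_of_pos {m : ℕ} (hm : 0 < m) : jump s m = jump s (m / 2) + m + s := by
  obtain ⟨m, rfl⟩ := Nat.exists_eq_succ_of_ne_zero hm.ne'
  rw [jump]

theorem jump_one : jump s 1 = s + 1 := by
  rw [jump_of_pos one_pos, Nat.div_eq_of_lt one_lt_two, jump_zero]
  omega

theorem jump_lt_succ (m : ℕ) : jump s m < jump s (m + 1) := by
  induction m using Nat.strong_induction_on with
  | _ m ih =>
    rcases Nat.eq_zero_or_pos m with rfl | hm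
    · rw [jump_zero, jump_one]
      omega
    rw [jump_of_pos hm, jump_of_pos (by omega : 0 < m + 1)]
    obtain h | h : (m + 1) / 2 = m / 2 ∨ (m + 1) / 2 = m / 2 + 1 := by omega
    · rw [h]
      omega
    · have := ih (m / 2) (by omega)
      rw [h]
      omega

theorem jump_strictMono : StrictMono (jump s) :=
  strictMono_nat_of_lt_succ jump_lt_succ

theorem le_count_iff {m x : ℕ} : m ≤ count s x ↔ jump s m ≤ x :=
  ⟨fun h => (jump_strictMono.monotone h).trans
      (Nat.findGreatest_spec (P := fun m => jump s m ≤ x) (Nat.zero_le x)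
        (by rw [jump_zero]; exact Nat.zero_le x)),
    fun h => Nat.le_findGreatest ((jump_strictMono.id_le m).trans h) h⟩

theorem count_eq_iff {m x : ℕ} : count s x = m ↔ jump s m ≤ x ∧ x < jump s (m + 1) := by
  rw [← le_count_iff, ← not_le, ← le_count_iff]
  omega

theorem jump_count_le (x : ℕ) : jump s (count s x) ≤ x :=
  le_count_iff.1 le_rfl

theorem lt_jump_count_succ (x : ℕ) : x < jump s (count s x + 1) :=
  (count_eq_iff.1 rfl).2

theorem count_jump (m : ℕ) : count s (jump s m) = m :=
  count_eq_iff.2 ⟨le_rfl, jump_lt_succ m⟩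

theorem count_eq_zero_iff {x : ℕ} : count s x = 0 ↔ x ≤ s := by
  rw [count_eq_iff, jump_zero, zero_add, jump_one]
  omega

theorem count_succ_eq_or (x : ℕ) :
    count s (x + 1) = count s x ∨ count s (x + 1) = count s x + 1 := by
  have hle : count s x ≤ count s (x + 1) :=
    le_count_iff.2 ((jump_count_le x).trans x.le_succ)
  have hlt : count s (x + 1) < count s x + 1 + 1 := by
    rw [← not_le, le_count_iff]
    have := lt_jump_count_succ (s := s) x
    have := jump_lt_succ (s := s) (count s x + 1)
    omega
  omega

theorem count_sub_count (y : ℕ) : count s (y - s - count s y) = count s (y + 1) / 2 := by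
  rcases Nat.eq_zero_or_pos (count s y) with h0 | hpos
  · have hy := count_eq_zero_iff.1 h0
    have := count_succ_eq_or (s := s) y
    rw [h0, show y - s - 0 = 0 by omega, count_eq_zero_iff.2 (Nat.zero_le s)]
    omega
  have hsucc := count_succ_eq_or (s := s) y
  set m := count s y with hm
  have hy := count_eq_iff.1 hm.symm
  have hjm := jump_of_pos (s := s) hpos
  have hjm1 := jump_of_pos (s := s) (by omega : 0 < m + 1)
  rcases hsucc with h | h
  · have hy1 := (count_eq_iff.1 h).2
    have := (jump_strictMono (s := s)).monotone (show (m + 1) / 2 ≤ m / 2 + 1 by omega)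
    rw [h]
    exact count_eq_iff.2 ⟨by omega, by omega⟩
  · have hy1 := (count_eq_iff.1 h).1
    rw [h, show y - s - m = jump s ((m + 1) / 2) by omega, count_jump]

theorem count_succ_eq_half_add_half {x : ℕ} (hx : s < x) :
    count s (x + 1) = count s (x + 1) / 2 + count s x / 2 + 1 := by
  rcases count_succ_eq_or (s := s) x with h | h
  · set m := count s x with hm
    have hpos : 0 < m := Nat.pos_of_ne_zero (mt count_eq_zero_iff.1 (by omega))
    have hx0 := (count_eq_iff.1 hm.symm).1
    have hx1 := (count_eq_iff.1 h).2
    have hjm := jump_of_pos (s := s) hpos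
    have hjm1 := jump_of_pos (s := s) (by omega : 0 < m + 1)
    obtain hodd | heven : (m + 1) / 2 = m / 2 + 1 ∨ (m + 1) / 2 = m / 2 := by omega
    · omega
    · rw [heven] at hjm1
      omega
  · omega

theorem isMetaFib_one_add_count (s : ℕ) : IsMetaFib s (fun n => 1 + count s (n - 1)) where
  init n hn := by
    rw [count_eq_zero_iff.2 (by omega)]
  two := by
    have h0 : count s s = 0 := count_eq_zero_iff.2 le_rfl
    have h1 : 1 ≤ count s (s + 1) := le_count_iff.2 jump_one.le
    have := count_succ_eq_or (s := s) s
    show 1 + count s (s + 1) = 2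
    omega
  recurrence n hn := by
    have hA := count_sub_count (s := s) (n - 2)
    have hB := count_sub_count (s := s) (n - 3)
    have hstep := count_succ_eq_half_add_half (s := s) (x := n - 2) (by omega)
    rw [show n - 2 + 1 = n - 1 by omega] at hA hstep
    rw [show n - 3 + 1 = n - 2 by omega] at hB
    simp only [show n - 1 - 1 = n - 2 by omega, show n - 2 - 1 = n - 3 by omega]
    rw [show n - s - (1 + count s (n - 2)) - 1 = n - 2 - s - count s (n - 2) by omega,
      show n - s - 1 - (1 + count s (n - 3)) - 1 = n - 3 - s - count s (n - 3) by omega, hA, hB]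
    omega

theorem IsMetaFib.unique {a b : ℕ → ℕ} (ha : IsMetaFib s a) (hb : IsMetaFib s b)
    (hb_pos : ∀ n, 0 < b n) : a = b := by
  funext n
  induction n using Nat.strong_induction_on with
  | _ n ih =>
    rcases lt_trichotomy n (s + 2) with hn | rfl | hn
    · rw [ha.init n (by omega), hb.init n (by omega)]
    · rw [ha.two, hb.two]
    · have := hb_pos (n - 1)
      have := hb_pos (n - 2)
      rw [ha.recurrence n hn, hb.recurrence n hn, ih (n - 1) (by omega), ih (n - 2) (by omega),
        ih (n - s - b (n - 1)) (by omega), ih (n - s - 1 - b (n - 2)) (by omega)]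

theorem IsMetaFib.eq_one_add_count {a : ℕ → ℕ} (ha : IsMetaFib s a) (n : ℕ) :
    a n = 1 + count s (n - 1) :=
  congrFun (ha.unique (isMetaFib_one_add_count s) fun _ => by omega) n

theorem jump_eq_jump_zero_add (m : ℕ) : jump s m = jump 0 m + s * m.size := by
  induction m using Nat.strong_induction_on with
  | _ m ih =>
    rcases Nat.eq_zero_or_pos m with rfl | hm
    · simp [jump_zero]
    rw [jump_of_pos hm, jump_of_pos (s := 0) hm, Nat.size_eq_size_div_two_add_one hm,
      ih (m / 2) (by omega)]
    ring

theorem jump_zero_two_pow (k : ℕ) : jump 0 (2 ^ k) + 1 = 2 ^ (k + 1) := by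
  induction k with
  | zero => simp [jump_one]
  | succ k ih =>
    have := Nat.one_le_two_pow (n := k)
    rw [jump_of_pos (by positivity), pow_succ, Nat.mul_div_cancel _ two_pos, pow_succ]
    rw [pow_succ] at ih
    omega

theorem jump_zero_two_pow_sub_one (k : ℕ) : jump 0 (2 ^ k - 1) + k + 2 = 2 ^ (k + 1) := by
  induction k with
  | zero => simp [jump_zero]
  | succ k ih =>
    have := Nat.one_le_two_pow (n := k)
    rw [pow_succ] at ih ⊢
    rw [jump_of_pos (by omega), show (2 ^ k * 2 - 1) / 2 = 2 ^ k - 1 by omega, pow_succ]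
    omega

theorem count_add_mul_eq_of_size {y h : ℕ} (h1 : (count 0 y).size ≤ h)
    (h2 : h ≤ (count 0 y + 1).size) : count s (y + s * h) = count 0 y := by
  have hy := count_eq_iff.1 (rfl : count 0 y = count 0 y)
  have hm := Nat.mul_le_mul_left s h1
  have hm1 := Nat.mul_le_mul_left s h2
  rw [count_eq_iff, jump_eq_jump_zero_add (s := s) (count 0 y),
    jump_eq_jump_zero_add (s := s) (count 0 y + 1)]
  omega

theorem count_add_mul_eq {y h : ℕ} (h1 : 2 ^ h ≤ y + h + 1) (h2 : y + 2 ≤ 2 ^ (h + 1)) :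
    count s (y + s * h) = count 0 y := by
  apply count_add_mul_eq_of_size
  · rw [Nat.size_le, ← not_le, le_count_iff]
    have := jump_zero_two_pow h
    omega
  · cases h with
    | zero => exact Nat.zero_le _
    | succ k =>
      have := jump_zero_two_pow_sub_one k
      have := Nat.one_le_two_pow (n := k)
      have : 2 ^ k - 1 ≤ count 0 y := le_count_iff.2 (by omega)
      exact Nat.lt_size.2 (by omega)

theorem count_eq_two_pow_sub_one {x k : ℕ} (h1 : 2 ^ (k + 1) + s * k ≤ x + k + 2)
    (h2 : x + 2 ≤ 2 ^ (k + 1) + s * (k + 1)) : count s x = 2 ^ k - 1 := by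
  have hlow := jump_zero_two_pow_sub_one k
  have hhigh := jump_zero_two_pow k
  rw [count_eq_iff, Nat.sub_add_cancel Nat.one_le_two_pow, jump_eq_jump_zero_add (s := s) (2 ^ k - 1),
    jump_eq_jump_zero_add (s := s) (2 ^ k), Nat.size_two_pow_sub_one, Nat.size_pow]
  omega

end MetaFib

open MetaFib in
/-- Lemma 3 of Jackson–Ruskey: relation between the meta-Fibonacci sequence a_s
    (s ≥ 0) and the Conolly sequence a_0.  For h ≥ 1:
    a_s(n) = a_0(n - s·h) whenever 2^h + (s-1)h + 1 ≤ n ≤ 2^(h+1) + (s-1)h - 1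
    (expressed additively as 2^h + s·h + 1 ≤ n + h and n + h + 1 ≤ 2^(h+1) + s·h),
    and a_s(n) = 2^(h-1) whenever 2^h + (s-1)h - s + 1 ≤ n ≤ 2^h + (s-1)h
    (expressed additively). -/
theorem meta_fibonacci_eq_conolly_shift (s : ℕ) (a0 as : ℕ → ℕ)
    (h00 : a0 0 = 1) (h01 : a0 1 = 1) (h02 : a0 2 = 2)
    (h0rec : ∀ n, 2 < n → a0 n = a0 (n - a0 (n - 1)) + a0 (n - 1 - a0 (n - 2)))
    (hsinit : ∀ n ≤ s + 1, as n = 1) (hstwo : as (s + 2) = 2)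
    (hsrec : ∀ n, s + 2 < n →
      as n = as (n - s - as (n - 1)) + as (n - s - 1 - as (n - 2))) :
    ∀ h, 1 ≤ h →
      (∀ n, 2 ^ h + s * h + 1 ≤ n + h → n + h + 1 ≤ 2 ^ (h + 1) + s * h →
        as n = a0 (n - s * h)) ∧
      (∀ n, 2 ^ h + s * h + 1 ≤ n + h + s → n + h ≤ 2 ^ h + s * h →
        as n = 2 ^ (h - 1)) := by
  have h0 : IsMetaFib 0 a0 :=
    ⟨fun n hn => by interval_cases n <;> assumption, h02, by simpa using h0rec⟩
  have hs : IsMetaFib s as := ⟨hsinit, hstwo, hsrec⟩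
  intro h hh
  refine ⟨fun n hn1 hn2 => ?_, fun n hn1 hn2 => ?_⟩
  · have := Nat.lt_two_pow_self (n := h)
    rw [hs.eq_one_add_count, h0.eq_one_add_count, show n - 1 = n - s * h - 1 + s * h by omega,
      count_add_mul_eq (h := h) (by omega) (by omega)]
  · obtain ⟨k, rfl⟩ := Nat.exists_eq_add_of_le' hh
    have := Nat.one_le_two_pow (n := k)
    have := mul_add_one s k
    rw [hs.eq_one_add_count, count_eq_two_pow_sub_one (k := k) (by omega) (by omega),
      Nat.add_sub_cancel]
    omega
end

section
/- For s ≥ 1, the following formal power series identity holds: ((1 - z^s)/(1 - z)) · ( z + z ∑_{n ≥ 1} ∏_{k=1}^n z^(s-1)(z + z^(2^k)) ) = (1/(1-z)) · ( z + z ∑_{n ≥ 1} z^((s-1)n) z^(2^n) ∏_{k=1}^{n-1} (z + z^(2^k)) ). -/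
/-!
Write `t = s - 1` and `P n = ∏_{k=1}^n x^t (x + x^(2^k))`. Splitting the last factor gives
`P (n+1) = x^(t+1) P n + x^(t(n+1)) x^(2^(n+1)) ∏_{k=1}^n (x + x^(2^k))`, so multiplying the
left-hand sum by `1 - x^(t+1)` telescopes to the right-hand sum up to the boundary term
`x^(t+2) P N`. For `x = X` that term is divisible by `X^(N+1)`, so it does not contribute to
the coefficient of degree `N`.
-/

open PowerSeries Finset

theorem Finset.one_sub_mul_sum_Icc_add_mul_of_succ_eq {R : Type*} [CommRing R]
    (a b : ℕ → R) (c : R) (h : ∀ n, a (n + 1) = c * a n + b (n + 1)) (N : ℕ) :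
    (1 - c) * ∑ n ∈ Icc 1 N, a n + c * a N = c * a 0 + ∑ n ∈ Icc 1 N, b n := by
  induction N with
  | zero => simp
  | succ N ih =>
    rw [sum_Icc_succ_top (by omega), sum_Icc_succ_top (by omega)]
    linear_combination ih + h N

section MetaFibonacci

variable {R : Type*} [CommRing R] (x : R) (t : ℕ)

theorem prod_Icc_pow_mul_add_pow_two_pow_succ (n : ℕ) :
    ∏ k ∈ Icc 1 (n + 1), x ^ t * (x + x ^ 2 ^ k)
      = x ^ (t + 1) * ∏ k ∈ Icc 1 n, x ^ t * (x + x ^ 2 ^ k)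
        + x ^ (t * (n + 1)) * x ^ 2 ^ (n + 1) * ∏ k ∈ Icc 1 n, (x + x ^ 2 ^ k) := by
  simp only [prod_Icc_succ_top (Nat.le_add_left 1 n), prod_mul_distrib, prod_const,
    Nat.card_Icc, Nat.add_sub_cancel, ← pow_mul]
  ring

theorem pow_dvd_prod_Icc_pow_mul_add_pow_two_pow (n : ℕ) :
    x ^ n ∣ ∏ k ∈ Icc 1 n, x ^ t * (x + x ^ 2 ^ k) := by
  have hx : ∀ k ∈ Icc 1 n, x ∣ x ^ t * (x + x ^ 2 ^ k) := fun k _ =>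
    dvd_mul_of_dvd_right (dvd_add dvd_rfl (dvd_pow_self x (by positivity))) _
  simpa using prod_dvd_prod_of_dvd (fun _ => x) _ hx

theorem one_sub_pow_mul_add_pow_mul_prod_Icc (N : ℕ) :
    (1 - x ^ (t + 1)) * (x + x * ∑ n ∈ Icc 1 N, ∏ k ∈ Icc 1 n, x ^ t * (x + x ^ 2 ^ k))
        + x ^ (t + 2) * ∏ k ∈ Icc 1 N, x ^ t * (x + x ^ 2 ^ k)
      = x + x * ∑ n ∈ Icc 1 N,
          x ^ (t * n) * x ^ 2 ^ n * ∏ k ∈ Icc 1 (n - 1), (x + x ^ 2 ^ k) := by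
  have telescope := one_sub_mul_sum_Icc_add_mul_of_succ_eq
    (fun n => ∏ k ∈ Icc 1 n, x ^ t * (x + x ^ 2 ^ k))
    (fun n => x ^ (t * n) * x ^ 2 ^ n * ∏ k ∈ Icc 1 (n - 1), (x + x ^ 2 ^ k)) (x ^ (t + 1))
    (fun n => by simpa using prod_Icc_pow_mul_add_pow_two_pow_succ x t n) N
  simp only [Icc_eq_empty_of_lt zero_lt_one, prod_empty, mul_one] at telescope
  linear_combination x * telescope

end MetaFibonacci

theorem PowerSeries.coeff_mul_eq_zero_of_X_pow_dvd {R : Type*} [CommSemiring R] {N : ℕ}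
    (f : R⟦X⟧) {g : R⟦X⟧} (hg : X ^ (N + 1) ∣ g) : coeff N (f * g) = 0 :=
  X_pow_dvd_iff.mp (hg.mul_left f) N N.lt_succ_self

/-- The formal power series identity (over ℚ)
    ((1 - z^s)/(1 - z)) · ( z + z ∑_{n ≥ 1} ∏_{k=1}^n z^(s-1)(z + z^(2^k)) )
      = (1/(1-z)) · ( z + z ∑_{n ≥ 1} z^((s-1)n) z^(2^n) ∏_{k=1}^{n-1} (z + z^(2^k)) ),
    for s ≥ 1.  Both infinite sums are legitimate formal sums since the n-th
    summand has order ≥ n; the identity is expressed coefficientwise, the degree-N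
    coefficient only involving the summands with n ≤ N. -/
theorem meta_fibonacci_gf_identity (s : ℕ) (hs : 1 ≤ s) (N : ℕ) :
    PowerSeries.coeff (R := ℚ) N
        ((1 - (X : PowerSeries ℚ) ^ s) * (1 - X)⁻¹ *
          (X + X * ∑ n ∈ Finset.Icc 1 N,
            ∏ k ∈ Finset.Icc 1 n, X ^ (s - 1) * (X + X ^ (2 ^ k))))
      = PowerSeries.coeff (R := ℚ) N
        ((1 - (X : PowerSeries ℚ))⁻¹ *
          (X + X * ∑ n ∈ Finset.Icc 1 N,
            X ^ ((s - 1) * n) * X ^ (2 ^ n) *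
              ∏ k ∈ Finset.Icc 1 (n - 1), (X + X ^ (2 ^ k)))) := by
  obtain ⟨t, rfl⟩ := Nat.exists_eq_add_of_le' hs
  simp only [Nat.add_sub_cancel]
  have hdvd : X ^ (N + 1) ∣ X ^ (t + 2) * ∏ k ∈ Icc 1 N, (X : ℚ⟦X⟧) ^ t * (X + X ^ 2 ^ k) := by
    rw [pow_succ' X N, pow_succ]
    exact mul_dvd_mul (dvd_mul_left X _) (pow_dvd_prod_Icc_pow_mul_add_pow_two_pow X t N)
  rw [← one_sub_pow_mul_add_pow_mul_prod_Icc, mul_comm _ (1 - X)⁻¹, mul_assoc,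
    mul_add (1 - X)⁻¹ _ (X ^ (t + 2) * _), map_add, coeff_mul_eq_zero_of_X_pow_dvd _ hdvd,
    add_zero]
end

section
/- Fix s ≥ 1 and let a_s be the meta-Fibonacci sequence (a_s(n)=1 for 0 ≤ n ≤ s+1, a_s(s+2)=2, a_s(n)=a_s(n-s-a_s(n-1))+a_s(n-s-1-a_s(n-2)) for n>s+2). Then a_s(n) equals the number of compositions n = x_0 + x_1 + ⋯ + x_k (k ≥ 0 arbitrary) where x_0 ∈ {1, 2, …, s} and for each i ≥ 1, x_i ∈ {s, 2^i + s - 1}. -/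
/-!
Record which parts `x_1, …, x_k` are long (`x_{j+1} = 2^(j+1) + s - 1` instead of `s`) in the
bits of a pattern `b < 2^k`. The long parts add `excess b = ∑_{j ∈ bits b} (2^(j+1) - 1)`, which
is `b + ⌊b/2⌋ + ⌊b/4⌋ + ⋯`, to `s * k`, and `x_0 ∈ [1, s]` then forces `k`. Hence the compositions
of `n` correspond to the patterns `b` with `minTailSum s b = excess b + s * size b < n`.

As `minTailSum s` is strictly increasing, these `b` form an initial segment of length
`metaFib s n`, and `b < metaFib s n ↔ minTailSum s b < n`. Splitting `b` by parity with
`minTailSum s b = minTailSum s ⌊b/2⌋ + b + s` gives `metaFib s n = B n + B (n - 1)`, where `B m`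
counts the `c` with `minTailSum s c + 2c + s < m`. Comparing `2c` with the threshold
`metaFib s (m - 1)` shows that these are exactly the `c` with
`minTailSum s c < m - s - metaFib s (m - 1)`, so `B m = metaFib s (m - s - metaFib s (m - 1))`.
-/

theorem StrictMono.setOf_lt_eq_Iio_ncard {f : ℕ → ℕ} (hf : StrictMono f) (n : ℕ) :
    {b | f b < n} = Set.Iio {b | f b < n}.ncard := by
  have hex : ∃ b, n ≤ f b := ⟨n, hf.id_le n⟩
  suffices h : {b | f b < n} = Set.Iio (Nat.find hex) by rw [h, Set.ncard_Iio_nat]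
  ext b
  simp only [Set.mem_ofPred_eq, Set.mem_Iio, Nat.lt_find_iff, not_le]
  exact ⟨fun hb m hm => (hf.monotone hm).trans_lt hb, fun h => h b le_rfl⟩

theorem Set.ncard_eq_ncard_even_add_ncard_odd {p : ℕ → Prop} (hp : {b | p b}.Finite) :
    {b | p b}.ncard = {c | p (2 * c)}.ncard + {c | p (2 * c + 1)}.ncard := by
  have hsplit :
      {b | p b} = (2 * ·) '' {c | p (2 * c)} ∪ (2 * · + 1) '' {c | p (2 * c + 1)} := by
    ext b
    obtain ⟨c, rfl | rfl⟩ := b.even_or_odd' <;> simp <;> omega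
  rw [hsplit] at hp ⊢
  rw [ncard_union_eq _ (finite_union.1 hp).1 (finite_union.1 hp).2,
    ncard_image_of_injective _ (mul_right_injective₀ two_ne_zero),
    ncard_image_of_injective _ fun _ _ h => by simpa using h]
  rw [disjoint_left]
  rintro _ ⟨c, -, rfl⟩ ⟨d, -, h⟩
  dsimp only at h
  omega

theorem Nat.size_eq_size_div_two_add_one_s17 {b : ℕ} (hb : b ≠ 0) : b.size = (b / 2).size + 1 := by
  obtain ⟨c, rfl | rfl⟩ := b.even_or_odd'
  · have h := Nat.size_bit (b := false) (n := c) (by simpa [Nat.bit_val] using hb)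
    simpa [Nat.bit_val] using h
  · have h := Nat.size_bit (b := true) (n := c) (by simp [Nat.bit_val])
    have hc : (2 * c + 1) / 2 = c := by omega
    simpa [Nat.bit_val, hc] using h

namespace MetaFibonacci

open Set

def excess (b : ℕ) : ℕ := (b.bitIndices.map fun j => 2 ^ (j + 1) - 1).sum

theorem excess_eq_excess_div_two_add (b : ℕ) : excess b = excess (b / 2) + b := by
  have hterm : ∀ j, 2 ^ (j + 1 + 1) - 1 = (2 ^ (j + 1) - 1) + 2 * 2 ^ j := by
    intro j
    have := Nat.one_le_two_pow (n := j)
    rw [pow_succ, pow_succ]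
    omega
  obtain ⟨c, rfl | rfl⟩ := b.even_or_odd'
  · simp [excess, Function.comp_def, hterm, List.sum_map_add, List.sum_map_mul_left]
  · have hc : (2 * c + 1) / 2 = c := by omega
    simp [excess, Function.comp_def, hterm, List.sum_map_add, List.sum_map_mul_left, hc]
    omega

theorem excess_strictMono : StrictMono excess := by
  intro b b' h
  induction b' using Nat.strong_induction_on generalizing b with
  | _ b' ih =>
    have hhalf : excess (b / 2) ≤ excess (b' / 2) := by
      rcases (Nat.div_le_div_right (c := 2) h.le).eq_or_lt with heq | hlt
      · rw [heq]
      · exact (ih _ (by omega) hlt).le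
    rw [excess_eq_excess_div_two_add b, excess_eq_excess_div_two_add b']
    omega

theorem excess_eq_sum {b k : ℕ} (hb : b < 2 ^ k) :
    excess b = ∑ j ∈ Finset.range k, if b.testBit j then 2 ^ (j + 1) - 1 else 0 := by
  rw [← Finset.sum_filter, excess, ← List.sum_toFinset _ Nat.bitIndices_nodup]
  congr 1
  ext j
  simp only [List.mem_toFinset, Nat.mem_bitIndices, Finset.mem_filter, Finset.mem_range,
    iff_and_self]
  intro hj
  exact (Nat.pow_lt_pow_iff_right one_lt_two).1 ((Nat.ge_two_pow_of_testBit hj).trans_lt hb)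

def minTailSum (s b : ℕ) : ℕ := excess b + s * b.size

variable {s : ℕ}

theorem minTailSum_strictMono : StrictMono (minTailSum s) :=
  excess_strictMono.add_monotone fun _ _ h => Nat.mul_le_mul_left s (Nat.size_le_size h)

@[simp] theorem minTailSum_zero : minTailSum s 0 = 0 := by simp [minTailSum, excess]

theorem minTailSum_eq_minTailSum_div_two_add {b : ℕ} (hb : b ≠ 0) :
    minTailSum s b = minTailSum s (b / 2) + b + s := by
  rw [minTailSum, minTailSum, excess_eq_excess_div_two_add, Nat.size_eq_size_div_two_add_one_s17 hb]
  ring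

theorem minTailSum_two_mul {c : ℕ} (hc : c ≠ 0) :
    minTailSum s (2 * c) = minTailSum s c + 2 * c + s := by
  rw [minTailSum_eq_minTailSum_div_two_add (by omega), Nat.mul_div_cancel_left c two_pos]

theorem minTailSum_two_mul_add_one (c : ℕ) :
    minTailSum s (2 * c + 1) = minTailSum s c + 2 * c + s + 1 := by
  rw [minTailSum_eq_minTailSum_div_two_add (by omega), show (2 * c + 1) / 2 = c by omega]
  ring

noncomputable def metaFib (s n : ℕ) : ℕ := {b | minTailSum s b < n}.ncard

theorem lt_metaFib_iff {b n : ℕ} : b < metaFib s n ↔ minTailSum s b < n := by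
  rw [metaFib, ← mem_Iio, ← minTailSum_strictMono.setOf_lt_eq_Iio_ncard, mem_ofPred_eq]

theorem minTailSum_one : minTailSum s 1 = s + 1 := by
  simpa using minTailSum_two_mul_add_one (s := s) 0

theorem metaFib_eq_one {n : ℕ} (hn₁ : 1 ≤ n) (hn : n ≤ s + 1) : metaFib s n = 1 := by
  have hpos : 0 < metaFib s n := lt_metaFib_iff.2 (by rw [minTailSum_zero]; omega)
  have hle : ¬ 1 < metaFib s n := by rw [lt_metaFib_iff, minTailSum_one]; omega
  omega

theorem metaFib_self_add_two : metaFib s (s + 2) = 2 := by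
  have hone : 1 < metaFib s (s + 2) := by rw [lt_metaFib_iff, minTailSum_one]; omega
  have hle : ¬ 2 < metaFib s (s + 2) := by
    rw [lt_metaFib_iff, show 2 = 2 * 1 by rfl, minTailSum_two_mul one_ne_zero, minTailSum_one]
    omega
  omega

theorem metaFib_eq_ncard_add_ncard {n : ℕ} (hn : s + 1 ≤ n) :
    metaFib s n = {c | minTailSum s c + 2 * c + s < n}.ncard +
      {c | minTailSum s c + 2 * c + s < n - 1}.ncard := by
  rw [metaFib, ncard_eq_ncard_even_add_ncard_odd]
  · congr 2 <;> ext c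
    · rcases eq_or_ne c 0 with rfl | hc
      · simp only [mem_ofPred_eq, mul_zero, minTailSum_zero]
        omega
      · simp [minTailSum_two_mul hc]
    · simp only [mem_ofPred_eq, minTailSum_two_mul_add_one]
      omega
  · exact (finite_Iio n).subset fun b hb => (minTailSum_strictMono.id_le b).trans_lt hb

theorem setOf_minTailSum_add_two_mul_lt {m : ℕ} (hm : s + 2 ≤ m) :
    {c | minTailSum s c + 2 * c + s < m} = {c | minTailSum s c < m - s - metaFib s (m - 1)} := by
  set t := metaFib s (m - 1)
  ext c
  simp only [mem_ofPred_eq]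
  constructor
  · intro hc
    by_contra! hle
    have hct : 2 * c ≤ t - 1 := by omega
    have hprev : minTailSum s (t - 1) < m - 1 := lt_metaFib_iff.1 (by omega)
    rcases eq_or_ne (t - 1) 0 with h0 | h0
    · obtain rfl : c = 0 := by omega
      rw [minTailSum_zero] at hle
      omega
    have hmono : minTailSum s c ≤ minTailSum s ((t - 1) / 2) :=
      minTailSum_strictMono.monotone (by omega)
    rw [minTailSum_eq_minTailSum_div_two_add h0] at hprev
    omega
  · intro hc
    suffices 2 * c ≤ t by omega
    by_contra! hlt
    have ht : 1 ≤ t := lt_metaFib_iff.2 (by rw [minTailSum_zero]; omega)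
    have hnext : m - 1 ≤ minTailSum s t := not_lt.1 (lt_metaFib_iff.not.1 (lt_irrefl t))
    have hmono : minTailSum s (t / 2) < minTailSum s c := minTailSum_strictMono (by omega)
    rw [minTailSum_eq_minTailSum_div_two_add (by omega)] at hnext
    omega

theorem metaFib_rec {n : ℕ} (hn : s + 3 ≤ n) :
    metaFib s n =
      metaFib s (n - s - metaFib s (n - 1)) + metaFib s (n - s - 1 - metaFib s (n - 2)) := by
  rw [metaFib_eq_ncard_add_ncard (by omega), setOf_minTailSum_add_two_mul_lt (by omega),
    setOf_minTailSum_add_two_mul_lt (by omega),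
    show n - 1 - 1 = n - 2 by omega, show n - 1 - s = n - s - 1 by omega]
  rfl

theorem sub_metaFib_pos {m : ℕ} (hm : s + 2 ≤ m) : 0 < m - s - metaFib s (m - 1) := by
  have h0 : 0 ∈ {c | minTailSum s c + 2 * c + s < m} := by
    simp only [mem_ofPred_eq, minTailSum_zero, mul_zero]
    omega
  rw [setOf_minTailSum_add_two_mul_lt hm] at h0
  simpa using h0

theorem eq_metaFib {a : ℕ → ℕ} (hs : 1 ≤ s) (hinit : ∀ n ≤ s + 1, a n = 1)
    (htwo : a (s + 2) = 2)
    (hrec : ∀ n, s + 2 < n → a n = a (n - s - a (n - 1)) + a (n - s - 1 - a (n - 2)))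
    {n : ℕ} (hn : 1 ≤ n) : a n = metaFib s n := by
  induction n using Nat.strong_induction_on with
  | _ n ih =>
    rcases (by omega : n ≤ s + 1 ∨ n = s + 2 ∨ s + 3 ≤ n) with h | rfl | h
    · rw [hinit n h, metaFib_eq_one hn h]
    · rw [htwo, metaFib_self_add_two]
    · have h₁ := sub_metaFib_pos (s := s) (m := n) (by omega)
      have h₂ := sub_metaFib_pos (s := s) (m := n - 1) (by omega)
      rw [show n - 1 - 1 = n - 2 by omega, show n - 1 - s = n - s - 1 by omega] at h₂
      rw [hrec n (by omega), ih (n - 1) (by omega) (by omega), ih (n - 2) (by omega) (by omega),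
        ih _ (by omega) h₁, ih _ (by omega) (by omega), metaFib_rec h]

theorem two_pow_succ_add_sub_one_ne (s j : ℕ) : 2 ^ (j + 1) + s - 1 ≠ s := by
  have := Nat.one_lt_two_pow (n := j + 1) (by omega)
  omega

def tailPart (s b j : ℕ) : ℕ := if b.testBit j then 2 ^ (j + 1) + s - 1 else s

def tailParts (s k b : ℕ) : List ℕ := List.ofFn fun j : Fin k => tailPart s b j

theorem sum_tailParts {k b : ℕ} (hb : b < 2 ^ k) : (tailParts s k b).sum = s * k + excess b := by
  have hpart : ∀ j, tailPart s b j = s + if b.testBit j then 2 ^ (j + 1) - 1 else 0 := by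
    intro j
    have := Nat.one_le_two_pow (n := j + 1)
    unfold tailPart; split <;> omega
  rw [tailParts, List.sum_ofFn, Fin.sum_univ_eq_sum_range (tailPart s b), excess_eq_sum hb,
    Finset.sum_congr rfl fun j _ => hpart j, Finset.sum_add_distrib]
  simp [mul_comm]

def pattern (s : ℕ) (t : List ℕ) : ℕ := Nat.ofBits fun j : Fin t.length => t[(j : ℕ)] ≠ s

theorem pattern_lt_two_pow (s : ℕ) (t : List ℕ) : pattern s t < 2 ^ t.length :=
  Nat.ofBits_lt_two_pow _

theorem pattern_tailParts {k b : ℕ} (hb : b < 2 ^ k) : pattern s (tailParts s k b) = b := by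
  apply Nat.eq_of_testBit_eq
  intro j
  rw [pattern, Nat.testBit_ofBits]
  split
  · cases hbit : b.testBit j <;> simp [tailParts, tailPart, hbit, two_pow_succ_add_sub_one_ne]
  · simp only [tailParts, List.length_ofFn] at *
    exact (Nat.testBit_lt_two_pow (hb.trans_le (Nat.pow_le_pow_right two_pos (by omega)))).symm

theorem tailParts_pattern {t : List ℕ}
    (ht : ∀ j (hj : j < t.length), t[j] = s ∨ t[j] = 2 ^ (j + 1) + s - 1) :
    tailParts s t.length (pattern s t) = t := by
  apply List.ext_getElem (by simp [tailParts])
  intro j hj hj'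
  simp only [tailParts, List.getElem_ofFn, tailPart, pattern, Nat.testBit_ofBits_lt _ _ hj']
  rcases ht j hj' with h | h
  · simp [h]
  · simp [h, two_pow_succ_add_sub_one_ne]

def compositions (s n : ℕ) : Set (List ℕ) :=
  {l : List ℕ | l.sum = n ∧ 1 ≤ l.headI ∧ l.headI ≤ s ∧
    ∀ i, 1 ≤ i → i < l.length → (l.getD i 0 = s ∨ l.getD i 0 = 2 ^ i + s - 1)}

theorem mem_compositions_iff {n : ℕ} {l : List ℕ} :
    l ∈ compositions s n ↔
      ∃ x k b, 1 ≤ x ∧ x ≤ s ∧ b < 2 ^ k ∧ x + s * k + excess b = n ∧ l = x :: tailParts s k b := by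
  constructor
  · rintro ⟨hsum, hx₁, hxs, hparts⟩
    obtain ⟨x, t, rfl⟩ : ∃ x t, l = x :: t := by
      cases l with
      | nil => simp at hx₁
      | cons x t => exact ⟨x, t, rfl⟩
    have ht := tailParts_pattern (s := s) (t := t) fun j hj => by
      simpa [List.getElem?_eq_getElem hj] using hparts (j + 1) (by omega) (by simpa)
    have htsum := sum_tailParts (s := s) (pattern_lt_two_pow s t)
    rw [ht] at htsum
    refine ⟨x, t.length, pattern s t, hx₁, hxs, pattern_lt_two_pow s t, ?_, by rw [ht]⟩
    simp only [List.sum_cons] at hsum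
    omega
  · rintro ⟨x, k, b, hx₁, hxs, hb, hsum, rfl⟩
    refine ⟨by rw [List.sum_cons, sum_tailParts hb]; omega, hx₁, hxs, ?_⟩
    intro i hi hlen
    obtain ⟨j, rfl⟩ : ∃ j, i = j + 1 := ⟨i - 1, by omega⟩
    have hj : j < k := by simpa [tailParts] using hlen
    cases hbit : b.testBit j <;> simp [tailParts, tailPart, hj, hbit]

-- `(n - excess b - 1) / s` is the only length `k` that leaves a first part in `[1, s]`.
def compositionOf (s n b : ℕ) : List ℕ :=
  (n - excess b - s * ((n - excess b - 1) / s)) :: tailParts s ((n - excess b - 1) / s) b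

theorem compositionOf_eq {n x k b : ℕ} (hx₁ : 1 ≤ x) (hxs : x ≤ s)
    (hsum : x + s * k + excess b = n) : compositionOf s n b = x :: tailParts s k b := by
  have hk : (n - excess b - 1) / s = k :=
    Nat.div_eq_of_lt_le (by rw [Nat.mul_comm]; omega) (by rw [Nat.add_mul, Nat.mul_comm]; omega)
  rw [compositionOf, hk]
  congr 1
  omega

theorem exists_compositionOf_eq (hs : 1 ≤ s) {n b : ℕ} (hb : minTailSum s b < n) :
    ∃ x k, 1 ≤ x ∧ x ≤ s ∧ b < 2 ^ k ∧ x + s * k + excess b = n ∧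
      compositionOf s n b = x :: tailParts s k b := by
  rw [minTailSum] at hb
  have hsize : b.size ≤ (n - excess b - 1) / s :=
    (Nat.le_div_iff_mul_le hs).2 (by rw [Nat.mul_comm]; omega)
  have hdiv := Nat.div_add_mod (n - excess b - 1) s
  have hmod := Nat.mod_lt (n - excess b - 1) hs
  refine ⟨_, _, ?_, ?_, Nat.size_le.1 hsize, ?_, rfl⟩ <;> omega

theorem bijOn_compositionOf (hs : 1 ≤ s) (n : ℕ) :
    BijOn (compositionOf s n) {b | minTailSum s b < n} (compositions s n) := by
  refine InvOn.bijOn (f' := fun l => pattern s l.tail) ⟨?_, ?_⟩ ?_ ?_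
  · intro b hb
    obtain ⟨x, k, -, -, hbk, -, heq⟩ := exists_compositionOf_eq hs hb
    simp [heq, pattern_tailParts hbk]
  · intro l hl
    obtain ⟨x, k, b, hx₁, hxs, hb, hsum, rfl⟩ := mem_compositions_iff.1 hl
    simp [pattern_tailParts hb, compositionOf_eq hx₁ hxs hsum]
  · intro b hb
    obtain ⟨x, k, hx₁, hxs, hbk, hsum, heq⟩ := exists_compositionOf_eq hs hb
    exact heq ▸ mem_compositions_iff.2 ⟨x, k, b, hx₁, hxs, hbk, hsum, rfl⟩
  · intro l hl
    obtain ⟨x, k, b, hx₁, hxs, hb, hsum, rfl⟩ := mem_compositions_iff.1 hl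
    have hsize : s * b.size ≤ s * k := Nat.mul_le_mul_left s (Nat.size_le.2 hb)
    simp only [List.tail_cons, mem_ofPred_eq, pattern_tailParts hb, minTailSum]
    omega

theorem ncard_compositions (hs : 1 ≤ s) (n : ℕ) : (compositions s n).ncard = metaFib s n :=
  (bijOn_compositionOf hs n).ncard_eq.symm

end MetaFibonacci

/-- For s ≥ 1 and n ≥ 1, the meta-Fibonacci number a_s(n) counts the compositions
    n = x_0 + x_1 + ⋯ + x_k with x_0 ∈ {1, …, s} and x_i ∈ {s, 2^i + s - 1} for
    i ≥ 1.  Compositions are represented as lists of parts. -/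
theorem meta_fibonacci_counts_compositions (s : ℕ) (hs : 1 ≤ s) (a : ℕ → ℕ)
    (hinit : ∀ n ≤ s + 1, a n = 1) (htwo : a (s + 2) = 2)
    (hrec : ∀ n, s + 2 < n →
      a n = a (n - s - a (n - 1)) + a (n - s - 1 - a (n - 2))) :
    ∀ n, 1 ≤ n →
      a n = Set.ncard {l : List ℕ | l.sum = n ∧ 1 ≤ l.headI ∧ l.headI ≤ s ∧
        ∀ i, 1 ≤ i → i < l.length →
          (l.getD i 0 = s ∨ l.getD i 0 = 2 ^ i + s - 1)} := by
  intro n hn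
  rw [MetaFibonacci.eq_metaFib hs hinit htwo hrec hn]
  exact (MetaFibonacci.ncard_compositions hs n).symm
end

section
/- Fix s ≥ 0, define p_s(n) as the position of the n-th 1 in the infinite word D_s = 1 0^(s_1 - 1) 1 0^(s_2 - 1) 1 0^(s_3 - 1) ⋯, where s_j = r(j) + s·[j is a power of 2] and r(j) = ν₂(j)+1. Then the formal power series ∑_{n ≥ 0} p_s(n) z^n (with p_s(0)=1) equals (1/(1-z)) · ( 1 + z ∑_{k ≥ 0} z^(2^k) ( s + 1/(1 - z^(2^k)) ) ). -/
/-!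
Since `p_s(n) = 1 + s_1 + ⋯ + s_(n-1)` and `(1 - X)⁻¹ * F` has the partial sums of the
coefficients of `F` as coefficients, it suffices to show that the `n`-th coefficient of
`∑ₖ X^(2^k) (s + (1 - X^(2^k))⁻¹)` is the block length `s_n`. The series
`X^(2^k) (1 - X^(2^k))⁻¹` contributes `1` exactly when `2^k ∣ n`, which happens for `ν₂(n) + 1`
values of `k`, and `s X^(2^k)` contributes `s` exactly when `n = 2^k`.
-/

open PowerSeries Finset
open scoped Classical

namespace PowerSeries

variable {k : Type*} [Field k]

theorem inv_one_sub_X_pow {d : ℕ} (hd : d ≠ 0) :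
    (1 - X ^ d : k⟦X⟧)⁻¹ = expand d hd (mk 1) := by
  have hc : constantCoeff (1 - X ^ d : k⟦X⟧) ≠ 0 := by simp [zero_pow hd]
  rw [eq_comm, eq_inv_iff_mul_eq_one hc, ← expand_X d hd, ← map_one (expand d hd), ← map_sub, ← map_mul,
    mk_one_mul_one_sub_eq_one, map_one]

theorem coeff_inv_one_sub_X_pow {d : ℕ} (hd : d ≠ 0) (n : ℕ) :
    coeff n (1 - X ^ d : k⟦X⟧)⁻¹ = if d ∣ n then 1 else 0 := by
  simp [inv_one_sub_X_pow hd, coeff_expand]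

theorem coeff_inv_one_sub_X_mul (φ : k⟦X⟧) (n : ℕ) :
    coeff n ((1 - X)⁻¹ * φ) = ∑ j ∈ range (n + 1), coeff j φ := by
  rw [← pow_one X, inv_one_sub_X_pow one_ne_zero, expand_one_apply, mul_comm, coeff_mul,
    Nat.sum_antidiagonal_eq_sum_range_succ (fun i j => coeff i φ * coeff j (mk 1))]
  simp

theorem coeff_X_pow_mul_C_add_inv_one_sub_X_pow (a : k) {d : ℕ} (hd : d ≠ 0) (n : ℕ) :
    coeff n (X ^ d * (C a + (1 - X ^ d)⁻¹)) =
      (if n = d then a else 0) + (if d ∣ n ∧ n ≠ 0 then 1 else 0) := by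
  rw [coeff_X_pow_mul', map_add, coeff_C, coeff_inv_one_sub_X_pow hd]
  by_cases hdn : d ≤ n
  · have : n = d → d ∣ n := fun h => h ▸ dvd_rfl
    simp only [if_pos hdn, Nat.sub_eq_zero_iff_le, Nat.dvd_sub_self_right]
    grind
  · have : ¬(d ∣ n ∧ n ≠ 0) := fun ⟨h, hn⟩ => hdn (Nat.le_of_dvd (Nat.pos_of_ne_zero hn) h)
    rw [if_neg hdn, if_neg (by omega), if_neg this, add_zero]

end PowerSeries

theorem card_filter_range_pow_dvd {p n N : ℕ} [Fact p.Prime] (hn : n ≠ 0)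
    (hN : padicValNat p n ≤ N) :
    #{k ∈ range (N + 1) | p ^ k ∣ n} = padicValNat p n + 1 := by
  rw [← card_range (padicValNat p n + 1)]
  congr 1
  ext k
  simp only [mem_filter, mem_range, padicValNat_dvd_iff_le hn]
  omega

theorem sum_range_ite_eq_pow {M : Type*} [AddCommMonoid M] {b n N : ℕ} (hb : 1 < b)
    (hn : n ≤ N) (a : M) :
    ∑ k ∈ range (N + 1), (if n = b ^ k then a else 0) = if ∃ m, n = b ^ m then a else 0 := by
  by_cases h : ∃ m, n = b ^ m
  · obtain ⟨m, rfl⟩ := h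
    have hm : m < N + 1 := by have := Nat.lt_pow_self (n := m) hb; omega
    rw [if_pos ⟨m, rfl⟩, sum_eq_single_of_mem m (mem_range.mpr hm) fun k _ hkm => if_neg
      fun h => hkm (Nat.pow_right_injective hb h).symm, if_pos rfl]
  · exact (sum_eq_zero fun k _ => if_neg fun h' => h ⟨k, h'⟩).trans (if_neg h).symm

theorem eq_sum_range_of_eq_add {M : Type*} [AddCommMonoid M] {f a : ℕ → M} {N : ℕ}
    (h0 : f 0 = a 0) (hsucc : ∀ n < N, f (n + 1) = f n + a (n + 1)) :
    f N = ∑ j ∈ range (N + 1), a j := by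
  induction N with
  | zero => simp [h0]
  | succ N ih =>
    rw [hsucc N N.lt_succ_self, ih fun n hn => hsucc n (by omega), sum_range_succ _ (N + 1)]

/-- The length `s_n` of the `n`-th block `1 0^(s_n - 1)` of the word `D_s`. -/
noncomputable def blockLength (s n : ℕ) : ℕ :=
  padicValNat 2 n + 1 + s * (if ∃ m : ℕ, n = 2 ^ m then 1 else 0)

noncomputable def blockSeries (s N : ℕ) : ℚ⟦X⟧ :=
  ∑ k ∈ range (N + 1), X ^ (2 ^ k) * (C (s : ℚ) + (1 - X ^ (2 ^ k))⁻¹)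

theorem coeff_blockSeries (s : ℕ) {N n : ℕ} (hn : n ≤ N) :
    coeff n (blockSeries s N) = if n = 0 then 0 else (blockLength s n : ℚ) := by
  have h2 : ∀ k : ℕ, 2 ^ k ≠ 0 := fun k => pow_ne_zero k two_ne_zero
  simp only [blockSeries, map_sum, coeff_X_pow_mul_C_add_inv_one_sub_X_pow _ (h2 _),
    sum_add_distrib, sum_range_ite_eq_pow one_lt_two hn]
  rcases eq_or_ne n 0 with rfl | hn0
  · have : ¬∃ m, 0 = 2 ^ m := fun ⟨m, hm⟩ => h2 m hm.symm
    simp [this]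
  · rw [sum_boole, if_neg hn0]
    simp only [hn0, ne_eq, not_false_eq_true, and_true]
    rw [card_filter_range_pow_dvd hn0 ((padicValNat_le_nat_log n).trans
      ((Nat.log_le_self 2 n).trans hn))]
    simp only [blockLength]
    split_ifs <;> push_cast <;> ring

/-- Generating function of p_s(n), the position of the n-th 1 in the infinite word
    D_s = 1 0^(s_1-1) 1 0^(s_2-1) ⋯, where s_j = r(j) + s·[j is a power of 2] and
    r(j) = ν₂(j) + 1 is the ruler function; equivalently p_s(0) = p_s(1) = 1 and
    p_s(n+1) = p_s(n) + s_n for n ≥ 1.  Then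
    ∑_{n ≥ 0} p_s(n) z^n = (1/(1-z)) · (1 + z ∑_{k ≥ 0} z^(2^k)(s + 1/(1-z^(2^k)))).
    The infinite sum is a legitimate formal sum (the k-th term has order 2^k); the
    identity is expressed coefficientwise, the degree-N coefficient involving only
    the terms with k ≤ N. -/
theorem pos_generating_function (s : ℕ) (p : ℕ → ℕ)
    (hp0 : p 0 = 1) (hp1 : p 1 = 1)
    (hrec : ∀ n, 1 ≤ n → p (n + 1)
      = p n + (padicValNat 2 n + 1 + s * (if ∃ m : ℕ, n = 2 ^ m then 1 else 0))) :
    ∀ N : ℕ,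
      PowerSeries.coeff (R := ℚ) N (PowerSeries.mk fun n => (p n : ℚ))
        = PowerSeries.coeff (R := ℚ) N
            ((1 - (X : PowerSeries ℚ))⁻¹ *
              (1 + X * ∑ k ∈ Finset.range (N + 1),
                X ^ (2 ^ k) * (C (R := ℚ) (s : ℚ) + (1 - X ^ (2 ^ k))⁻¹))) := by
  intro N
  change _ = coeff N ((1 - X)⁻¹ * (1 + X * blockSeries s N))
  rw [coeff_mk, coeff_inv_one_sub_X_mul]
  refine eq_sum_range_of_eq_add (f := fun n => (p n : ℚ)) (by simp [hp0]) fun n hn => ?_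
  rw [map_add, coeff_one, if_neg n.succ_ne_zero, coeff_succ_X_mul, zero_add,
    coeff_blockSeries s hn.le]
  rcases Nat.eq_zero_or_pos n with rfl | hn1
  · simp [hp0, hp1]
  · rw [if_neg hn1.ne', hrec n hn1, blockLength, Nat.cast_add]
end
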